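/- arXiv:2403.09943 — 9 statements merged into one kernel-verified Lean document; each statement's English description precedes it below -/
import Mathlib

section
/- Let P be a finite partially ordered set, let L ⊆ P be an antichain, and let 𝒞 be a finite multiset of chains of P such that every chain C ∈ 𝒞 contains exactly one element of L. For x ∈ P write c(x) for the number of chains in 𝒞 (counted with multiplicity) that contain x. Suppose there is a positive integer γ such that c(x) = γ for every x ∈ L and c(x) ≥ γ for every x ∈ P. Then every antichain A of P satisfies |A| ≤ |L|; that is, L is a maximum antichain. -/
/-!
Double counting the incidences between the chains of `𝒞` and the elements of an antichain `A`:
a chain meets `A` at most once, so `γ * |A| ≤ ∑_{x ∈ A} c x ≤ |𝒞|`, while it meets `L` exactly once,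
so `|𝒞| = ∑_{x ∈ L} c x = γ * |L|`.
-/

open Finset

namespace Multiset

variable {α : Type*} [DecidableEq α]

lemma sum_card_filter_mem_eq_sum_card_inter (𝒞 : Multiset (Finset α)) (A : Finset α) :
    ∑ x ∈ A, card (𝒞.filter (x ∈ ·)) = (𝒞.map fun C => #(C ∩ A)).sum := by
  induction 𝒞 using Multiset.induction with
  | empty => simp
  | cons C 𝒞 ih =>
    simp only [filter_cons, map_cons, sum_cons, card_add, apply_ite card, card_singleton,
      card_zero, sum_add_distrib, ih, sum_ite_mem, sum_const, smul_eq_mul, mul_one]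
    rw [Finset.inter_comm]

lemma sum_card_filter_mem_le_card (𝒞 : Multiset (Finset α)) {A : Finset α}
    (h𝒞 : ∀ C ∈ 𝒞, #(C ∩ A) ≤ 1) :
    ∑ x ∈ A, card (𝒞.filter (x ∈ ·)) ≤ card 𝒞 := by
  rw [sum_card_filter_mem_eq_sum_card_inter]
  simpa using sum_le_card_nsmul (𝒞.map fun C => #(C ∩ A)) 1 (by simpa using h𝒞)

lemma sum_card_filter_mem_eq_card (𝒞 : Multiset (Finset α)) {L : Finset α}
    (h𝒞 : ∀ C ∈ 𝒞, #(C ∩ L) = 1) :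
    ∑ x ∈ L, card (𝒞.filter (x ∈ ·)) = card 𝒞 := by
  rw [sum_card_filter_mem_eq_sum_card_inter, map_congr rfl h𝒞]
  simp

end Multiset

lemma Finset.card_inter_le_one_of_isChain_of_isAntichain {α : Type*} [DecidableEq α]
    {r : α → α → Prop} {C A : Finset α} (hC : IsChain r (C : Set α))
    (hA : IsAntichain r (A : Set α)) : #(C ∩ A) ≤ 1 :=
  card_le_one.mpr fun _ ha _ hb =>
    inter_subsingleton_of_isChain_of_isAntichain hC hA (by simpa using ha) (by simpa using hb)

theorem stmt_0_general {α : Type*} [PartialOrder α] [DecidableEq α]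
    (L : Finset α)
    (𝒞 : Multiset (Finset α))
    (hchain : ∀ C ∈ 𝒞, IsChain (· ≤ ·) (C : Set α))
    (hone : ∀ C ∈ 𝒞, (C ∩ L).card = 1)
    (c : α → ℕ)
    (hc : ∀ x : α, c x = Multiset.card (𝒞.filter (fun C => x ∈ C)))
    (γ : ℕ) (hγ : 0 < γ)
    (hcL : ∀ x ∈ L, c x = γ)
    (hcall : ∀ x : α, γ ≤ c x)
    (A : Finset α) (hA : IsAntichain (· ≤ ·) (A : Set α)) :
    A.card ≤ L.card := by
  refine Nat.le_of_mul_le_mul_left ?_ hγ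
  calc γ * #A = ∑ _x ∈ A, γ := by simp [mul_comm]
    _ ≤ ∑ x ∈ A, c x := sum_le_sum fun x _ => hcall x
    _ ≤ Multiset.card 𝒞 := by
      simpa only [hc] using 𝒞.sum_card_filter_mem_le_card fun C hC =>
        card_inter_le_one_of_isChain_of_isAntichain (hchain C hC) hA
    _ = ∑ x ∈ L, c x := by simpa only [hc] using (𝒞.sum_card_filter_mem_eq_card hone).symm
    _ = γ * #L := by simp [sum_congr rfl hcL, mul_comm]

/-- If `L` is an antichain in a finite poset and `𝒞` is a finite multiset of chains,
each containing exactly one element of `L`, such that every element of `L` lies in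
exactly `γ` chains (with multiplicity) and every element of the poset lies in at
least `γ` chains, then every antichain has size at most `|L|`. -/
theorem stmt_0 {α : Type*} [Fintype α] [PartialOrder α] [DecidableEq α]
    (L : Finset α) (hL : IsAntichain (· ≤ ·) (L : Set α))
    (𝒞 : Multiset (Finset α))
    (hchain : ∀ C ∈ 𝒞, IsChain (· ≤ ·) (C : Set α))
    (hone : ∀ C ∈ 𝒞, (C ∩ L).card = 1)
    (c : α → ℕ)
    (hc : ∀ x : α, c x = Multiset.card (𝒞.filter (fun C => x ∈ C)))
    (γ : ℕ) (hγ : 0 < γ)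
    (hcL : ∀ x ∈ L, c x = γ)
    (hcall : ∀ x : α, γ ≤ c x)
    (A : Finset α) (hA : IsAntichain (· ≤ ·) (A : Set α)) :
    A.card ≤ L.card :=
  stmt_0_general L 𝒞 hchain hone c hc γ hγ hcL hcall A hA
end

section
/- Let p, q be natural numbers and let i, j, i', j' be natural numbers with i + j = i' + j', j < j', 1 ≤ j, j' ≤ q, 1 ≤ i', and i ≤ p. Then C(p, i−1)·C(q, j)·C(p, i')·C(q, j'−1) > C(p, i'−1)·C(q, j')·C(p, i)·C(q, j−1). Equivalently, for a fixed value of i + j the ratio (C(p,i−1)·C(q,j)) / (C(p,i)·C(q,j−1)) = ((q−j+1)·i) / ((p−i+1)·j) is strictly decreasing in j. -/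
/-!
Write `a = i - 1`, `b = i' - 1`, `c = j - 1`, `d = j' - 1`; then `b < a` and `c < d`, and the
inequality is the product of two instances of strict log-concavity of `k ↦ C(n, k)`:
`C(p,b) C(p,a+1) < C(p,a) C(p,b+1)` and `C(q,c) C(q,d+1) < C(q,d) C(q,c+1)`.
-/

namespace Nat

theorem choose_mul_choose_succ_lt_choose_mul_choose_succ {n a b : ℕ} (hba : b < a)
    (han : a < n) :
    n.choose b * n.choose (a + 1) < n.choose a * n.choose (b + 1) := by
  have hpos : 0 < n.choose a * n.choose b :=
    Nat.mul_pos (choose_pos han.le) (choose_pos (by omega))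
  -- `C(n,k+1) (k+1) = C(n,k) (n-k)` reduces the claim to `(n-a)(b+1) < (n-b)(a+1)`.
  have key : (n - a) * (b + 1) < (n - b) * (a + 1) :=
    calc (n - a) * (b + 1) < (n - a) * (a + 1) := by gcongr; omega
      _ ≤ (n - b) * (a + 1) := by gcongr
  refine Nat.lt_of_mul_lt_mul_right (a := (a + 1) * (b + 1)) ?_
  calc n.choose b * n.choose (a + 1) * ((a + 1) * (b + 1))
      = n.choose b * (n.choose (a + 1) * (a + 1)) * (b + 1) := by ring
    _ = n.choose a * n.choose b * ((n - a) * (b + 1)) := by rw [choose_succ_right_eq]; ring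
    _ < n.choose a * n.choose b * ((n - b) * (a + 1)) := Nat.mul_lt_mul_of_pos_left key hpos
    _ = n.choose a * (n.choose (b + 1) * (b + 1)) * (a + 1) := by rw [choose_succ_right_eq]; ring
    _ = n.choose a * n.choose (b + 1) * ((a + 1) * (b + 1)) := by ring

end Nat

/-- For a fixed value of `i + j`, the ratio `|X_{i-1,j}| / |X_{i,j-1}|`
(where `|X_{i,j}| = C(p,i) * C(q,j)`) is strictly decreasing in `j`,
stated in cross-multiplied form. -/
theorem stmt_2 (p q i j i' j' : ℕ)
    (hsum : i + j = i' + j') (hjj' : j < j') (hj : 1 ≤ j) (hj'q : j' ≤ q)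
    (hi' : 1 ≤ i') (hip : i ≤ p) :
    Nat.choose p (i' - 1) * Nat.choose q j' * Nat.choose p i * Nat.choose q (j - 1) <
      Nat.choose p (i - 1) * Nat.choose q j * Nat.choose p i' * Nat.choose q (j' - 1) := by
  obtain ⟨a, rfl⟩ : ∃ a, i = a + 1 := ⟨i - 1, by omega⟩
  obtain ⟨b, rfl⟩ : ∃ b, i' = b + 1 := ⟨i' - 1, by omega⟩
  obtain ⟨c, rfl⟩ : ∃ c, j = c + 1 := ⟨j - 1, by omega⟩
  obtain ⟨d, rfl⟩ : ∃ d, j' = d + 1 := ⟨j' - 1, by omega⟩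
  simp only [Nat.add_sub_cancel]
  have hp := Nat.choose_mul_choose_succ_lt_choose_mul_choose_succ (n := p) (a := a) (b := b)
    (by omega) (by omega)
  have hq := Nat.choose_mul_choose_succ_lt_choose_mul_choose_succ (n := q) (a := d) (b := c)
    (by omega) (by omega)
  calc p.choose b * q.choose (d + 1) * p.choose (a + 1) * q.choose c
      = (p.choose b * p.choose (a + 1)) * (q.choose c * q.choose (d + 1)) := by ring
    _ < (p.choose a * p.choose (b + 1)) * (q.choose d * q.choose (c + 1)) :=
        Nat.mul_lt_mul'' hp hq
    _ = p.choose a * q.choose (c + 1) * p.choose (b + 1) * q.choose d := by ring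
end

section
/- Let p, q, r be natural numbers. Let A be an antichain (with respect to set inclusion) contained in the sphere S_r[p,q], i.e., every x ∈ A is a subset of [p+q] with |P₀ \ x| + |x \ P₀| = r, and no member of A is a proper subset of another. Then Σ_{x ∈ A} 1 / (C(p, |P₀ \ x|) · C(q, |x \ P₀|)) ≤ 1 (as a sum of real numbers). In other words, the spheres S_r[p,q] have the KLYM property. -/
open Finset

lemma card_subtype_lt {n c : ℕ} (h : c ≤ n) :
    Fintype.card {k : Fin n // (k : ℕ) < c} = c := by
  have e : {k : Fin n // (k : ℕ) < c} ≃ Fin c :=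
    { toFun := fun k => ⟨k.1, k.2⟩
      invFun := fun m => ⟨⟨m.1, lt_of_lt_of_le m.2 h⟩, m.2⟩
      left_inv := fun k => rfl
      right_inv := fun m => rfl }
  simp [Fintype.card_congr e]

def prefEquiv (n : ℕ) (s : Finset (Fin n)) :
    {π : Equiv.Perm (Fin n) // ∀ k, π k ∈ s ↔ (k : ℕ) < s.card} ≃
      (({k : Fin n // (k : ℕ) < s.card} ≃ {x : Fin n // x ∈ s}) ×
        ({k : Fin n // ¬ (k : ℕ) < s.card} ≃ {x : Fin n // x ∉ s})) where
  toFun := fun π => (Equiv.subtypeEquiv π.1 (fun k => (π.2 k).symm),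
    Equiv.subtypeEquiv π.1 (fun k => not_iff_not.mpr (π.2 k).symm))
  invFun := fun fg =>
    ⟨(Equiv.sumCompl (fun k : Fin n => (k : ℕ) < s.card)).symm.trans
        ((fg.1.sumCongr fg.2).trans (Equiv.sumCompl (fun x : Fin n => x ∈ s))), by
      intro k
      by_cases hk : (k : ℕ) < s.card
      · simp [Equiv.sumCompl_symm_apply_of_pos hk, hk, (fg.1 ⟨k, hk⟩).2]
      · simp [Equiv.sumCompl_symm_apply_of_neg hk, hk, (fg.2 ⟨k, hk⟩).2]⟩
  left_inv := fun π => by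
    ext k
    by_cases hk : (k : ℕ) < s.card
    · simp [Equiv.sumCompl_symm_apply_of_pos (p := fun k : Fin n => (k : ℕ) < s.card) hk,
        Equiv.subtypeEquiv]
    · simp [Equiv.sumCompl_symm_apply_of_neg (p := fun k : Fin n => (k : ℕ) < s.card) hk,
        Equiv.subtypeEquiv]
  right_inv := fun fg => by
    refine Prod.ext ?_ ?_
    · ext ⟨k, hk⟩
      simp [Equiv.subtypeEquiv, Equiv.sumCompl_symm_apply_of_pos (p := fun k : Fin n => (k : ℕ) < s.card) hk]
    · ext ⟨k, hk⟩
      simp [Equiv.subtypeEquiv, Equiv.sumCompl_symm_apply_of_neg (p := fun k : Fin n => (k : ℕ) < s.card) hk]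

lemma count_prefix (n : ℕ) (s : Finset (Fin n)) :
    (Finset.univ.filter fun π : Equiv.Perm (Fin n) => ∀ k, π k ∈ s ↔ (k : ℕ) < s.card).card
      = Nat.factorial s.card * Nat.factorial (n - s.card) := by
  have hcn : s.card ≤ n := by simpa using s.card_le_univ
  have h1 : Fintype.card {k : Fin n // (k : ℕ) < s.card} = s.card := card_subtype_lt hcn
  have h2 : Fintype.card {x : Fin n // x ∈ s} = s.card := Fintype.card_coe s
  have h3 : Fintype.card {k : Fin n // ¬ (k : ℕ) < s.card} = n - s.card := by
    rw [Fintype.card_subtype_compl, h1, Fintype.card_fin]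
  have h4 : Fintype.card {x : Fin n // x ∉ s} = n - s.card := by
    rw [Fintype.card_subtype_compl, h2, Fintype.card_fin]
  have e1 : {k : Fin n // (k : ℕ) < s.card} ≃ {x : Fin n // x ∈ s} :=
    Fintype.equivOfCardEq (by rw [h1, h2])
  have e2 : {k : Fin n // ¬ (k : ℕ) < s.card} ≃ {x : Fin n // x ∉ s} :=
    Fintype.equivOfCardEq (by rw [h3, h4])
  rw [← Fintype.card_subtype, Fintype.card_congr (prefEquiv n s), Fintype.card_prod,
    Fintype.card_equiv e1, Fintype.card_equiv e2, h1, h3]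

lemma filter_preimage_card {m : ℕ} {P : Finset ℕ} (e : Fin m ≃ {n : ℕ // n ∈ P})
    (a : Finset ℕ) (ha : a ⊆ P) :
    (Finset.univ.filter fun k : Fin m => ((e k : ℕ) ∈ a)).card = a.card := by
  apply Finset.card_bij (fun k _ => (e k : ℕ))
  · intro k hk; simpa using hk
  · intro k1 _ k2 _ h
    exact e.injective (Subtype.ext h)
  · intro n hn
    exact ⟨e.symm ⟨n, ha hn⟩, by simpa using hn, by simp⟩

lemma filter_preimage_subset {m : ℕ} {P : Finset ℕ} (e : Fin m ≃ {n : ℕ // n ∈ P})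
    {a b : Finset ℕ} (ha : a ⊆ P)
    (h : (Finset.univ.filter fun k : Fin m => ((e k : ℕ) ∈ a)) ⊆
      (Finset.univ.filter fun k : Fin m => ((e k : ℕ) ∈ b))) : a ⊆ b := by
  intro n hn
  have hk : e.symm ⟨n, ha hn⟩ ∈ (Finset.univ.filter fun k : Fin m => ((e k : ℕ) ∈ a)) := by
    simpa using hn
  have := h hk
  simpa using this

lemma prefix_subset {m : ℕ} (σ : Equiv.Perm (Fin m)) {s t : Finset (Fin m)}
    (hs : ∀ k, σ k ∈ s ↔ (k : ℕ) < s.card) (ht : ∀ k, σ k ∈ t ↔ (k : ℕ) < t.card)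
    (h : s.card ≤ t.card) : s ⊆ t := by
  intro x hx
  have h1 : ((σ.symm x : Fin m) : ℕ) < s.card := by
    rw [← hs (σ.symm x), Equiv.apply_symm_apply]; exact hx
  have h2 : σ (σ.symm x) ∈ t := (ht _).mpr (lt_of_lt_of_le h1 h)
  rwa [Equiv.apply_symm_apply] at h2

/-- The spheres `S_r[p,q]` have the KLYM property: for every antichain `A` contained
in the sphere of radius `r` around `P₀ = {1,…,p}` inside `𝒫({1,…,p+q})`, the sum of the
reciprocals of the sizes of the layers `X_{i,j}` through the members of `A` is at most 1. -/
theorem stmt_4 (p q r : ℕ) (A : Finset (Finset ℕ))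
    (hA : ∀ x ∈ A, x ⊆ Finset.Icc 1 (p + q) ∧
      (Finset.Icc 1 p \ x).card + (x \ Finset.Icc 1 p).card = r)
    (hanti : IsAntichain (· ⊆ ·) (A : Set (Finset ℕ))) :
    ∑ x ∈ A, (1 : ℝ) /
      (Nat.choose p (Finset.Icc 1 p \ x).card * Nat.choose q (x \ Finset.Icc 1 p).card) ≤ 1 := by
  classical
  set P : Finset ℕ := Finset.Icc 1 p with hP
  set Q : Finset ℕ := Finset.Icc (p + 1) (p + q) with hQ
  have hPcard : P.card = p := by simp [hP]
  have hQcard : Q.card = q := by simp [hQ]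
  have eP : Fin p ≃ {n : ℕ // n ∈ P} :=
    (Fintype.equivFinOfCardEq (by simp [Fintype.card_coe, hPcard])).symm
  have eQ : Fin q ≃ {n : ℕ // n ∈ Q} :=
    (Fintype.equivFinOfCardEq (by simp [Fintype.card_coe, hQcard])).symm
  -- the b-part of any member of A lies in Q
  have hbQ : ∀ x ∈ A, x \ P ⊆ Q := by
    intro x hx n hn
    rw [Finset.mem_sdiff] at hn
    have h1 := (hA x hx).1 hn.1
    rw [Finset.mem_Icc] at h1
    rw [hQ, Finset.mem_Icc]
    have : ¬ (1 ≤ n ∧ n ≤ p) := by rw [← Finset.mem_Icc]; exact hn.2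
    omega
  set sx : Finset ℕ → Finset (Fin p) :=
    fun x => Finset.univ.filter fun k => ((eP k : ℕ) ∈ P \ x) with hsx
  set tx : Finset ℕ → Finset (Fin q) :=
    fun x => Finset.univ.filter fun k => ((eQ k : ℕ) ∈ x \ P) with htx
  have hsxcard : ∀ x, (sx x).card = (P \ x).card := by
    intro x; exact filter_preimage_card eP _ Finset.sdiff_subset
  have htxcard : ∀ x ∈ A, (tx x).card = (x \ P).card := by
    intro x hx; exact filter_preimage_card eQ _ (hbQ x hx)
  set F : Finset ℕ → Finset (Equiv.Perm (Fin p) × Equiv.Perm (Fin q)) :=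
    fun x =>
      (Finset.univ.filter fun σ : Equiv.Perm (Fin p) =>
          ∀ k, σ k ∈ sx x ↔ (k : ℕ) < (sx x).card) ×ˢ
        (Finset.univ.filter fun τ : Equiv.Perm (Fin q) =>
          ∀ k, τ k ∈ tx x ↔ (k : ℕ) < (tx x).card) with hF
  -- cardinality of F x
  have hFcard : ∀ x, (F x).card =
      (Nat.factorial (sx x).card * Nat.factorial (p - (sx x).card)) *
        (Nat.factorial (tx x).card * Nat.factorial (q - (tx x).card)) := by
    intro x
    rw [hF]
    rw [Finset.card_product, count_prefix, count_prefix]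
  -- if a pair is compatible with both x and y, and the a-part of x is smaller, then y ⊆ x
  have key : ∀ x ∈ A, ∀ y ∈ A, ∀ στ : Equiv.Perm (Fin p) × Equiv.Perm (Fin q),
      στ ∈ F x → στ ∈ F y → (sx x).card ≤ (sx y).card → y ⊆ x := by
    intro x hx y hy στ hmx hmy hle
    rw [hF, Finset.mem_product, Finset.mem_filter, Finset.mem_filter] at hmx hmy
    have hss : sx x ⊆ sx y := prefix_subset στ.1 hmx.1.2 hmy.1.2 hle
    have haa : P \ x ⊆ P \ y :=
      filter_preimage_subset eP Finset.sdiff_subset hss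
    have hcards : (tx y).card ≤ (tx x).card := by
      have h1 := (hA x hx).2
      have h2 := (hA y hy).2
      have e1 := hsxcard x
      have e2 := hsxcard y
      have e3 := htxcard x hx
      have e4 := htxcard y hy
      omega
    have hts : tx y ⊆ tx x := prefix_subset στ.2 hmy.2.2 hmx.2.2 hcards
    have hbb : y \ P ⊆ x \ P :=
      filter_preimage_subset eQ (hbQ y hy) hts
    intro n hn
    by_cases hnP : n ∈ P
    · by_contra hnx
      have : n ∈ P \ x := Finset.mem_sdiff.mpr ⟨hnP, hnx⟩
      have := haa this
      rw [Finset.mem_sdiff] at this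
      exact this.2 hn
    · have : n ∈ y \ P := Finset.mem_sdiff.mpr ⟨hn, hnP⟩
      have := hbb this
      rw [Finset.mem_sdiff] at this
      exact this.1
  -- the compatibility sets are pairwise disjoint
  have hdisj : ∀ x ∈ A, ∀ y ∈ A, x ≠ y → Disjoint (F x) (F y) := by
    intro x hx y hy hne
    rw [Finset.disjoint_left]
    intro στ hmx hmy
    rcases le_total (sx x).card (sx y).card with hle | hle
    · exact hanti hy hx (Ne.symm hne) (key x hx y hy στ hmx hmy hle)
    · exact hanti hx hy hne (key y hy x hx στ hmy hmx hle)
  have hsum : ∑ x ∈ A, (F x).card ≤ Nat.factorial p * Nat.factorial q := by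
    rw [← Finset.card_biUnion hdisj]
    calc (A.biUnion F).card ≤ (Finset.univ : Finset (Equiv.Perm (Fin p) × Equiv.Perm (Fin q))).card :=
          Finset.card_le_univ _
      _ = Nat.factorial p * Nat.factorial q := by
          rw [Finset.card_univ, Fintype.card_prod, Fintype.card_perm, Fintype.card_perm,
            Fintype.card_fin, Fintype.card_fin]
  have hfac_pos : (0 : ℝ) < Nat.factorial p * Nat.factorial q := by positivity
  have hterm : ∀ x ∈ A, (1 : ℝ) /
      (Nat.choose p (P \ x).card * Nat.choose q (x \ P).card) =
        ((F x).card : ℝ) / (Nat.factorial p * Nat.factorial q) := by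
    intro x hx
    have hi : (P \ x).card ≤ p := by
      rw [← hPcard]; exact Finset.card_le_card Finset.sdiff_subset
    have hj : (x \ P).card ≤ q := by
      rw [← hQcard]; exact Finset.card_le_card (hbQ x hx)
    have h1 : Nat.choose p (P \ x).card * Nat.factorial (P \ x).card *
        Nat.factorial (p - (P \ x).card) = Nat.factorial p :=
      Nat.choose_mul_factorial_mul_factorial hi
    have h2 : Nat.choose q (x \ P).card * Nat.factorial (x \ P).card *
        Nat.factorial (q - (x \ P).card) = Nat.factorial q :=
      Nat.choose_mul_factorial_mul_factorial hj
    have hcard : (F x).card =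
        (Nat.factorial (P \ x).card * Nat.factorial (p - (P \ x).card)) *
          (Nat.factorial (x \ P).card * Nat.factorial (q - (x \ P).card)) := by
      rw [hFcard x, hsxcard x, htxcard x hx]
    have hchoose_pos : (0 : ℝ) <
        Nat.choose p (P \ x).card * Nat.choose q (x \ P).card := by
      have := Nat.choose_pos hi
      have := Nat.choose_pos hj
      positivity
    rw [div_eq_div_iff hchoose_pos.ne' hfac_pos.ne', hcard]
    push_cast [← h1, ← h2]
    ring
  calc ∑ x ∈ A, (1 : ℝ) /
        (Nat.choose p (P \ x).card * Nat.choose q (x \ P).card)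
      = ∑ x ∈ A, ((F x).card : ℝ) / (Nat.factorial p * Nat.factorial q) :=
        Finset.sum_congr rfl hterm
    _ = (∑ x ∈ A, ((F x).card : ℝ)) / (Nat.factorial p * Nat.factorial q) := by
        rw [Finset.sum_div]
    _ ≤ 1 := by
        rw [div_le_one hfac_pos]
        exact_mod_cast hsum
end

section
/- Let p, q, r be natural numbers. Every antichain A (with respect to set inclusion) contained in the sphere S_r[p,q] satisfies |A| ≤ max{ C(p,i)·C(q,j) : i + j = r }. That is, the width of S_r[p,q] is at most the size of its largest layer. -/
open Finset

section aux

variable {α : Type*} [Fintype α] [DecidableEq α]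

/-- The set of "compatible" enumerations of `α` for a set `s`:
those bijections `α ≃ Fin n` under which `s` is exactly the initial segment. -/
private def initEquiv (s : Finset α) :
    {σ : α ≃ Fin (Fintype.card α) // ∀ a, a ∈ s ↔ (σ a : ℕ) < s.card} ≃
      ({a : α // a ∈ s} ≃ {k : Fin (Fintype.card α) // (k : ℕ) < s.card}) ×
      ({a : α // ¬ a ∈ s} ≃ {k : Fin (Fintype.card α) // ¬ (k : ℕ) < s.card}) where
  toFun σ := (Equiv.subtypeEquiv σ.1 σ.2, Equiv.subtypeEquiv σ.1 (fun a => not_congr (σ.2 a)))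
  invFun fg := ⟨(Equiv.sumCompl (· ∈ s)).symm.trans ((fg.1.sumCongr fg.2).trans
      (Equiv.sumCompl (fun k : Fin (Fintype.card α) => (k : ℕ) < s.card))), by
    intro a
    by_cases h : a ∈ s
    · simp [h, Equiv.sumCompl_symm_apply_of_pos h, (fg.1 ⟨a, h⟩).2]
    · simp [Equiv.sumCompl_symm_apply_of_neg h, h, (fg.2 ⟨a, h⟩).2]⟩
  left_inv := by
    rintro ⟨σ, hσ⟩
    ext a
    by_cases h : a ∈ s
    · simp [Equiv.sumCompl_symm_apply_of_pos h, Equiv.subtypeEquiv]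
    · simp [Equiv.sumCompl_symm_apply_of_neg h, Equiv.subtypeEquiv]
  right_inv := by
    rintro ⟨f, g⟩
    refine Prod.ext ?_ ?_
    · ext a
      simp [Equiv.sumCompl_symm_apply_of_pos a.2, Equiv.subtypeEquiv]
    · ext a
      simp [Equiv.sumCompl_symm_apply_of_neg a.2, Equiv.subtypeEquiv]

private lemma card_fin_lt_subtype (n i : ℕ) (h : i ≤ n) :
    Fintype.card {k : Fin n // (k : ℕ) < i} = i := by
  have e : {k : Fin n // (k : ℕ) < i} ≃ Fin i :=
    { toFun := fun k => ⟨k.1, k.2⟩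
      invFun := fun k => ⟨⟨k.1, lt_of_lt_of_le k.2 h⟩, k.2⟩
      left_inv := fun k => rfl
      right_inv := fun k => rfl }
  rw [Fintype.card_congr e, Fintype.card_fin]

private lemma count_compat (s : Finset α) :
    (univ.filter fun σ : α ≃ Fin (Fintype.card α) =>
        ∀ a, a ∈ s ↔ (σ a : ℕ) < s.card).card
      = s.card.factorial * (Fintype.card α - s.card).factorial := by
  have hi : s.card ≤ Fintype.card α := s.card_le_univ.trans_eq (card_univ)
  rw [← Fintype.card_subtype, Fintype.card_congr (initEquiv s), Fintype.card_prod]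
  congr 1
  · have h1 : Fintype.card {a : α // a ∈ s} = s.card := Fintype.card_coe s
    have h2 := card_fin_lt_subtype (Fintype.card α) s.card hi
    rw [Fintype.card_equiv (Fintype.equivOfCardEq (h1.trans h2.symm)), h1]
  · have h1 : Fintype.card {a : α // ¬ a ∈ s} = Fintype.card α - s.card := by
      rw [Fintype.card_subtype_compl, Fintype.card_coe]
    have h2 : Fintype.card {k : Fin (Fintype.card α) // ¬ (k : ℕ) < s.card}
        = Fintype.card α - s.card := by
      rw [Fintype.card_subtype_compl, card_fin_lt_subtype _ _ hi, Fintype.card_fin]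
    rw [Fintype.card_equiv (Fintype.equivOfCardEq (h1.trans h2.symm)), h1]

private lemma key {α β : Type*} [Fintype α] [DecidableEq α] [Fintype β] [DecidableEq β]
    (r : ℕ) (B : Finset (Finset α × Finset β))
    (hcard : ∀ x ∈ B, x.1.card + x.2.card = r)
    (hanti : ∀ x ∈ B, ∀ y ∈ B, x.1 ⊆ y.1 → y.2 ⊆ x.2 → x = y) :
    B.card ≤ (range (r + 1)).sup
      (fun i => (Fintype.card α).choose i * (Fintype.card β).choose (r - i)) := by
  classical
  set n := Fintype.card α with hn
  set m := Fintype.card β with hm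
  set M := (range (r + 1)).sup (fun i => n.choose i * m.choose (r - i)) with hM
  set f : Finset α × Finset β → ℕ := fun x =>
    (x.1.card.factorial * (n - x.1.card).factorial) *
      (x.2.card.factorial * (m - x.2.card).factorial) with hf
  -- the count of compatible pairs of enumerations
  have hcount : ∀ x : Finset α × Finset β,
      ((univ : Finset ((α ≃ Fin n) × (β ≃ Fin m))).filter
        (fun ω => (∀ a, a ∈ x.1 ↔ (ω.1 a : ℕ) < x.1.card) ∧
                  (∀ b, b ∈ x.2 ↔ (ω.2 b : ℕ) < x.2.card))).card = f x := by
    intro x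
    rw [← Finset.univ_product_univ,
      Finset.filter_product (fun σ : α ≃ Fin n => ∀ a, a ∈ x.1 ↔ (σ a : ℕ) < x.1.card)
        (fun τ : β ≃ Fin m => ∀ b, b ∈ x.2 ↔ (τ b : ℕ) < x.2.card),
      Finset.card_product, count_compat, count_compat]
  -- each pair of enumerations is compatible with at most one member of B
  have hone : ∀ ω : (α ≃ Fin n) × (β ≃ Fin m),
      (B.filter (fun x => (∀ a, a ∈ x.1 ↔ (ω.1 a : ℕ) < x.1.card) ∧
                  (∀ b, b ∈ x.2 ↔ (ω.2 b : ℕ) < x.2.card))).card ≤ 1 := by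
    intro ω
    rw [Finset.card_le_one]
    intro x hx y hy
    simp only [mem_filter] at hx hy
    obtain ⟨hxB, hx1, hx2⟩ := hx
    obtain ⟨hyB, hy1, hy2⟩ := hy
    have main : ∀ u v : Finset α × Finset β, u ∈ B → v ∈ B →
        (∀ a, a ∈ u.1 ↔ (ω.1 a : ℕ) < u.1.card) →
        (∀ b, b ∈ u.2 ↔ (ω.2 b : ℕ) < u.2.card) →
        (∀ a, a ∈ v.1 ↔ (ω.1 a : ℕ) < v.1.card) →
        (∀ b, b ∈ v.2 ↔ (ω.2 b : ℕ) < v.2.card) →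
        u.1.card ≤ v.1.card → u = v := by
      intro u v huB hvB hu1 hu2 hv1 hv2 hle
      have h12 : u.1 ⊆ v.1 := by
        intro a ha
        exact (hv1 a).2 (lt_of_lt_of_le ((hu1 a).1 ha) hle)
      have hj : v.2.card ≤ u.2.card := by
        have := hcard u huB; have := hcard v hvB; omega
      have h21 : v.2 ⊆ u.2 := by
        intro b hb
        exact (hu2 b).2 (lt_of_lt_of_le ((hv2 b).1 hb) hj)
      exact hanti u huB v hvB h12 h21
    rcases le_total x.1.card y.1.card with h | h
    · exact main x y hxB hyB hx1 hx2 hy1 hy2 h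
    · exact (main y x hyB hxB hy1 hy2 hx1 hx2 h).symm
  -- double counting
  have hdouble : ∑ x ∈ B, f x ≤ n.factorial * m.factorial := by
    calc ∑ x ∈ B, f x
        = ∑ x ∈ B, ((univ : Finset ((α ≃ Fin n) × (β ≃ Fin m))).filter
            (fun ω => (∀ a, a ∈ x.1 ↔ (ω.1 a : ℕ) < x.1.card) ∧
                      (∀ b, b ∈ x.2 ↔ (ω.2 b : ℕ) < x.2.card))).card := by
            exact Finset.sum_congr rfl fun x _ => (hcount x).symm
      _ = ∑ x ∈ B, ∑ ω : (α ≃ Fin n) × (β ≃ Fin m),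
            if (∀ a, a ∈ x.1 ↔ (ω.1 a : ℕ) < x.1.card) ∧
               (∀ b, b ∈ x.2 ↔ (ω.2 b : ℕ) < x.2.card) then 1 else 0 := by
            exact Finset.sum_congr rfl fun x _ => Finset.card_filter _ _
      _ = ∑ ω : (α ≃ Fin n) × (β ≃ Fin m), ∑ x ∈ B,
            if (∀ a, a ∈ x.1 ↔ (ω.1 a : ℕ) < x.1.card) ∧
               (∀ b, b ∈ x.2 ↔ (ω.2 b : ℕ) < x.2.card) then 1 else 0 :=
            Finset.sum_comm
      _ ≤ ∑ _ω : (α ≃ Fin n) × (β ≃ Fin m), 1 := by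
            refine Finset.sum_le_sum fun ω _ => ?_
            rw [← Finset.card_filter]
            exact hone ω
      _ = n.factorial * m.factorial := by
            rw [Finset.sum_const, smul_eq_mul, mul_one, Finset.card_univ,
              Fintype.card_prod, Fintype.card_equiv (Fintype.equivFin α),
              Fintype.card_equiv (Fintype.equivFin β)]
  -- per-element bound
  have hper : ∀ x ∈ B, n.factorial * m.factorial ≤ M * f x := by
    intro x hx
    have hi : x.1.card ≤ n := x.1.card_le_univ.trans_eq card_univ
    have hj : x.2.card ≤ m := x.2.card_le_univ.trans_eq card_univ
    have hr := hcard x hx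
    have hix : x.1.card ∈ range (r + 1) := by rw [mem_range]; omega
    have hchoose : n.choose x.1.card * m.choose (r - x.1.card) ≤ M :=
      Finset.le_sup (f := fun i => n.choose i * m.choose (r - i)) hix
    have hjx : r - x.1.card = x.2.card := by omega
    rw [hjx] at hchoose
    have heq : n.factorial * m.factorial =
        (n.choose x.1.card * m.choose x.2.card) * f x := by
      rw [hf]
      rw [← Nat.choose_mul_factorial_mul_factorial hi,
        ← Nat.choose_mul_factorial_mul_factorial hj]
      ring
    rw [heq]
    exact Nat.mul_le_mul_right _ hchoose
  -- combine
  have hfinal : B.card * (n.factorial * m.factorial) ≤ M * (n.factorial * m.factorial) := by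
    calc B.card * (n.factorial * m.factorial)
        = ∑ _x ∈ B, n.factorial * m.factorial := by
          rw [Finset.sum_const, smul_eq_mul]
      _ ≤ ∑ x ∈ B, M * f x := Finset.sum_le_sum hper
      _ = M * ∑ x ∈ B, f x := by rw [Finset.mul_sum]
      _ ≤ M * (n.factorial * m.factorial) := Nat.mul_le_mul_left _ hdouble
  have hpos : 0 < n.factorial * m.factorial :=
    Nat.mul_pos (Nat.factorial_pos n) (Nat.factorial_pos m)
  exact Nat.le_of_mul_le_mul_right (by simpa [mul_comm] using hfinal) hpos

end aux

/-- Every antichain contained in the sphere `S_r[p,q]` has size at most the size of the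
largest layer `X_{i,j}` with `i + j = r`, i.e. `max { C(p,i) * C(q,j) : i + j = r }`. -/
theorem stmt_5 (p q r : ℕ) (A : Finset (Finset ℕ))
    (hA : ∀ x ∈ A, x ⊆ Finset.Icc 1 (p + q) ∧
      (Finset.Icc 1 p \ x).card + (x \ Finset.Icc 1 p).card = r)
    (hanti : IsAntichain (· ⊆ ·) (A : Set (Finset ℕ))) :
    A.card ≤ (Finset.range (r + 1)).sup (fun i => Nat.choose p i * Nat.choose q (r - i)) := by
  classical
  set P := Finset.Icc 1 p with hP
  set Q := Finset.Icc (p + 1) (p + q) with hQ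
  -- the encoding map
  set F : Finset ℕ → Finset {x : ℕ // x ∈ P} × Finset {x : ℕ // x ∈ Q} := fun S =>
    ((P \ S).subtype (· ∈ P), (S \ P).subtype (· ∈ Q)) with hF
  -- basic subset facts
  have hsubP : ∀ S, P \ S ⊆ P := fun S => Finset.sdiff_subset
  have hsubQ : ∀ S ∈ A, S \ P ⊆ Q := by
    intro S hS x hx
    rw [Finset.mem_sdiff] at hx
    have h1 := (hA S hS).1 hx.1
    rw [hP, Finset.mem_Icc] at hx
    rw [Finset.mem_Icc] at h1
    rw [hQ, Finset.mem_Icc]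
    omega
  have hcards : ∀ (s : Finset ℕ) (pr : ℕ → Prop) [DecidablePred pr], (∀ x ∈ s, pr x) →
      (s.subtype pr).card = s.card := by
    intro s pr _ h
    rw [← Finset.card_map (Function.Embedding.subtype pr), Finset.subtype_map,
      Finset.filter_true_of_mem h]
  -- decoding inclusion
  have hdec : ∀ S ∈ A, ∀ T ∈ A, (F S).1 ⊆ (F T).1 → (F T).2 ⊆ (F S).2 → T ⊆ S := by
    intro S hS T hT h1 h2 t ht
    by_cases htP : t ∈ P
    · by_contra htS
      have : (⟨t, htP⟩ : {x // x ∈ P}) ∈ (F S).1 := by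
        rw [hF]; simp only [Finset.mem_subtype, Finset.mem_sdiff]; exact ⟨htP, htS⟩
      have := h1 this
      rw [hF] at this; simp only [Finset.mem_subtype, Finset.mem_sdiff] at this
      exact this.2 ht
    · have htQ : t ∈ Q := hsubQ T hT (Finset.mem_sdiff.2 ⟨ht, htP⟩)
      have : (⟨t, htQ⟩ : {x // x ∈ Q}) ∈ (F T).2 := by
        rw [hF]; simp only [Finset.mem_subtype, Finset.mem_sdiff]; exact ⟨ht, htP⟩
      have := h2 this
      rw [hF] at this; simp only [Finset.mem_subtype, Finset.mem_sdiff] at this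
      exact this.1
  -- injectivity on A
  have hinj : Set.InjOn F A := by
    intro S hS T hT hFST
    have h1 : T ⊆ S := hdec S hS T hT (le_of_eq (congrArg Prod.fst hFST))
      (le_of_eq (congrArg Prod.snd hFST).symm)
    have h2 : S ⊆ T := hdec T hT S hS (le_of_eq (congrArg Prod.fst hFST).symm)
      (le_of_eq (congrArg Prod.snd hFST))
    exact Finset.Subset.antisymm h2 h1
  set B := A.image F with hB
  have hcardB : B.card = A.card := Finset.card_image_of_injOn hinj
  have hkey := key r B ?_ ?_
  · rw [hcardB] at hkey
    have hcP : Fintype.card {x : ℕ // x ∈ P} = p := by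
      rw [Fintype.card_coe, hP, Nat.card_Icc]; omega
    have hcQ : Fintype.card {x : ℕ // x ∈ Q} = q := by
      rw [Fintype.card_coe, hQ, Nat.card_Icc]; omega
    rw [hcP, hcQ] at hkey
    exact hkey
  · -- cards
    intro x hx
    rw [hB, Finset.mem_image] at hx
    obtain ⟨S, hS, rfl⟩ := hx
    have e1 : ((P \ S).subtype (· ∈ P)).card = (P \ S).card :=
      hcards _ _ (fun x hx => hsubP S hx)
    have e2 : ((S \ P).subtype (· ∈ Q)).card = (S \ P).card :=
      hcards _ _ (fun x hx => hsubQ S hS hx)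
    show ((P \ S).subtype (· ∈ P)).card + ((S \ P).subtype (· ∈ Q)).card = r
    rw [e1, e2]
    exact (hA S hS).2
  · -- antichain condition
    intro x hx y hy h1 h2
    rw [hB, Finset.mem_image] at hx hy
    obtain ⟨S, hS, rfl⟩ := hx
    obtain ⟨T, hT, rfl⟩ := hy
    have hTS : T ⊆ S := hdec S hS T hT h1 h2
    by_cases hST : S = T
    · rw [hST]
    · exact absurd hTS (hanti (by exact hT) (by exact hS) (fun h => hST h.symm))
end

section
/- Let p, q, k be natural numbers with 1 ≤ k and 2k ≤ p + q. Then max{ C(p,i)·C(q,j) : i + j = k − 1 } ≤ max{ C(p,i)·C(q,j) : i + j = k }. That is, for radii up to (p+q)/2, the size of the largest layer of the sphere S_k[p,q] is nondecreasing in k. -/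
/-!
If `i + j = k - 1` and `2k ≤ p + q`, then `2i < p` or `2j < q`. Since `C(n,r)` does not decrease
in `r` while `2r < n`, raising that index by one gives a term `C(p,i')·C(q,j')` with `i' + j' = k`
that is at least `C(p,i)·C(q,j)`.
-/

theorem Nat.choose_le_choose_succ_of_two_mul_lt {n r : ℕ} (h : 2 * r < n) :
    n.choose r ≤ n.choose (r + 1) :=
  Nat.le_of_mul_le_mul_right
    (calc n.choose r * (r + 1) ≤ n.choose r * (n - r) := Nat.mul_le_mul_left _ (by omega)
      _ = n.choose (r + 1) * (r + 1) := (Nat.choose_succ_right_eq n r).symm)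
    r.succ_pos

theorem stmt_6_general (p q k : ℕ) (hkpq : 2 * k ≤ p + q) :
    (Finset.range k).sup (fun i => Nat.choose p i * Nat.choose q (k - 1 - i)) ≤
      (Finset.range (k + 1)).sup (fun i => Nat.choose p i * Nat.choose q (k - i)) := by
  refine Finset.sup_le fun i hi => ?_
  have hik : i < k := Finset.mem_range.mp hi
  have le_layer {i' : ℕ} (hi' : i' ≤ k) : p.choose i' * q.choose (k - i') ≤
      (Finset.range (k + 1)).sup (fun i => p.choose i * q.choose (k - i)) :=
    Finset.le_sup (f := fun i => p.choose i * q.choose (k - i)) (Finset.mem_range.mpr (by omega))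
  by_cases hp : 2 * i < p
  · have hj : k - (i + 1) = k - 1 - i := by omega
    refine le_trans ?_ (le_layer (i' := i + 1) hik)
    rw [hj]
    exact Nat.mul_le_mul_right _ (Nat.choose_le_choose_succ_of_two_mul_lt hp)
  · have hq : 2 * (k - 1 - i) < q := by omega
    have hj : k - 1 - i + 1 = k - i := by omega
    refine le_trans ?_ (le_layer hik.le)
    rw [← hj]
    exact Nat.mul_le_mul_left _ (Nat.choose_le_choose_succ_of_two_mul_lt hq)

/-- For `1 ≤ k` with `2k ≤ p + q`, the size of the largest layer of the sphere
`S_k[p,q]`, namely `max { C(p,i) * C(q,j) : i + j = k }`, is nondecreasing in `k`. -/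
theorem stmt_6 (p q k : ℕ) (hk : 1 ≤ k) (hkpq : 2 * k ≤ p + q) :
    (Finset.range k).sup (fun i => Nat.choose p i * Nat.choose q (k - 1 - i)) ≤
      (Finset.range (k + 1)).sup (fun i => Nat.choose p i * Nat.choose q (k - i)) :=
  stmt_6_general p q k hkpq
end

section
/- Let p, q, r be natural numbers with 2r ≤ p + q. Then for all natural numbers i, j with i + j ≤ r, one has C(p,i)·C(q,j) ≤ max{ C(p,i')·C(q,j') : i' + j' = r }. That is, if r ≤ (p+q)/2 then the largest sublayer X_{i,j} of the ball B_r[p,q] lies on the boundary sphere S_r[p,q]. -/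
/-! If `i + j < r ≤ (p + q) / 2`, then `2i < p` or `2j < q`, so one of the factors `C(p,i)`,
`C(q,j)` lies on the increasing half of its row and that index can be raised by one without
decreasing the product. Repeating this moves any sublayer of the ball outwards to the sphere. -/

namespace Nat

theorem choose_le_succ_of_two_mul_lt {n k : ℕ} (h : 2 * k < n) :
    choose n k ≤ choose n (k + 1) := by
  refine Nat.le_of_mul_le_mul_right (c := k + 1) ?_ k.succ_pos
  rw [choose_succ_right_eq]
  exact Nat.mul_le_mul_left _ (by omega)

theorem choose_mul_choose_le_succ_left_or_right {p q i j : ℕ} (h : 2 * (i + j) + 2 ≤ p + q) :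
    choose p i * choose q j ≤ choose p (i + 1) * choose q j ∨
      choose p i * choose q j ≤ choose p i * choose q (j + 1) := by
  rcases lt_or_ge (2 * i) p with hi | hi
  · exact .inl (Nat.mul_le_mul_right _ (choose_le_succ_of_two_mul_lt hi))
  · exact .inr (Nat.mul_le_mul_left _ (choose_le_succ_of_two_mul_lt (by omega)))

theorem exists_choose_mul_choose_le_of_add_le {p q r i j : ℕ} (hr : 2 * r ≤ p + q)
    (hij : i + j ≤ r) : ∃ k ≤ r, choose p i * choose q j ≤ choose p k * choose q (r - k) := by
  obtain ⟨d, hd⟩ : ∃ d, r = i + j + d := ⟨r - (i + j), by omega⟩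
  subst hd
  induction d generalizing i j with
  | zero => exact ⟨i, by omega, by rw [show i + j + 0 - i = j by omega]⟩
  | succ d ih =>
    rcases choose_mul_choose_le_succ_left_or_right (p := p) (q := q) (i := i) (j := j)
      (by omega) with step | step
    · obtain ⟨k, hk, hle⟩ := ih (i := i + 1) (j := j) (by omega) (by omega)
      exact ⟨k, by omega, step.trans (by rwa [show i + j + (d + 1) = i + 1 + j + d by omega])⟩
    · obtain ⟨k, hk, hle⟩ := ih (i := i) (j := j + 1) (by omega) (by omega)
      exact ⟨k, by omega, step.trans (by rwa [show i + j + (d + 1) = i + (j + 1) + d by omega])⟩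

end Nat

/-- If `2r ≤ p + q`, then every sublayer size `C(p,i) * C(q,j)` with `i + j ≤ r` is at
most the size of the largest layer on the boundary sphere,
`max { C(p,i') * C(q,j') : i' + j' = r }`. -/
theorem stmt_7 (p q r : ℕ) (hr : 2 * r ≤ p + q) (i j : ℕ) (hij : i + j ≤ r) :
    Nat.choose p i * Nat.choose q j ≤
      (Finset.range (r + 1)).sup (fun i' => Nat.choose p i' * Nat.choose q (r - i')) := by
  obtain ⟨k, hk, hle⟩ := Nat.exists_choose_mul_choose_le_of_add_le hr hij
  exact hle.trans (Finset.le_sup (f := fun i' => Nat.choose p i' * Nat.choose q (r - i'))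
    (Finset.mem_range_succ_iff.mpr hk))
end

section
/- Let p, q, r be natural numbers with 1 ≤ r and 2r ≤ p + q. Every antichain A (with respect to set inclusion) contained in S_r[p,q] ∪ S_{r−1}[p,q] satisfies |A| ≤ max{ C(p,i)·C(q,j) : i + j = r }. That is, the width of the union of two consecutive spheres is at most the size of the largest layer of the outer sphere. -/
namespace Stmt8

open Finset

variable {α β : Type*} [DecidableEq α] [DecidableEq β]

/-- Shadow on the first coordinate of a family of pairs of finsets. -/
def sh1 (F : Finset (Finset α × Finset β)) : Finset (Finset α × Finset β) :=
  F.biUnion fun z => z.1.image fun a => (z.1.erase a, z.2)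

/-- Shadow on the second coordinate of a family of pairs of finsets. -/
def sh2 (F : Finset (Finset α × Finset β)) : Finset (Finset α × Finset β) :=
  F.biUnion fun z => z.2.image fun a => (z.1, z.2.erase a)

lemma mem_sh1 {F : Finset (Finset α × Finset β)} {y : Finset α × Finset β} :
    y ∈ sh1 F ↔ ∃ z ∈ F, ∃ a ∈ z.1, (z.1.erase a, z.2) = y := by
  simp [sh1]

lemma mem_sh2 {F : Finset (Finset α × Finset β)} {y : Finset α × Finset β} :
    y ∈ sh2 F ↔ ∃ z ∈ F, ∃ a ∈ z.2, (z.1, z.2.erase a) = y := by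
  simp [sh2]

lemma sh1_dominated {F : Finset (Finset α × Finset β)} {y : Finset α × Finset β}
    (hy : y ∈ sh1 F) :
    ∃ z ∈ F, y.1 ⊆ z.1 ∧ y.2 ⊆ z.2 ∧ y.1.card + y.2.card < z.1.card + z.2.card := by
  obtain ⟨z, hz, a, ha, rfl⟩ := mem_sh1.1 hy
  refine ⟨z, hz, erase_subset _ _, Subset.refl _, ?_⟩
  have h1 : (z.1.erase a).card = z.1.card - 1 := card_erase_of_mem ha
  have h2 : 0 < z.1.card := card_pos.2 ⟨a, ha⟩
  dsimp only
  omega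

lemma sh2_dominated {F : Finset (Finset α × Finset β)} {y : Finset α × Finset β}
    (hy : y ∈ sh2 F) :
    ∃ z ∈ F, y.1 ⊆ z.1 ∧ y.2 ⊆ z.2 ∧ y.1.card + y.2.card < z.1.card + z.2.card := by
  obtain ⟨z, hz, a, ha, rfl⟩ := mem_sh2.1 hy
  refine ⟨z, hz, Subset.refl _, erase_subset _ _, ?_⟩
  have h1 : (z.2.erase a).card = z.2.card - 1 := card_erase_of_mem ha
  have h2 : 0 < z.2.card := card_pos.2 ⟨a, ha⟩
  dsimp only
  omega

variable [Fintype α] [Fintype β]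

/-- Level `t` of the union of the two spheres: the layer with `|d| = t/2` and
`|c| + r = p + t/2 + t%2` (even `t`: outer sphere, odd `t`: inner sphere). -/
def Lev (p r t : ℕ) : Finset (Finset α × Finset β) :=
  univ.filter fun z => z.1.card + r = p + t / 2 + t % 2 ∧ z.2.card = t / 2

/-- Cardinality of level `t`. -/
def NL (p q r t : ℕ) : ℕ := p.choose (p + t / 2 + t % 2 - r) * q.choose (t / 2)

lemma mem_Lev {p r t : ℕ} {z : Finset α × Finset β} :
    z ∈ (Lev p r t : Finset (Finset α × Finset β)) ↔
      z.1.card + r = p + t / 2 + t % 2 ∧ z.2.card = t / 2 := by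
  simp [Lev]

lemma Lev_card {p q r t : ℕ} (hp : Fintype.card α = p) (hq : Fintype.card β = q)
    (hval : r ≤ p + t / 2 + t % 2) :
    (Lev p r t : Finset (Finset α × Finset β)).card = NL p q r t := by
  have h : (Lev p r t : Finset (Finset α × Finset β)) =
      (univ.powersetCard (p + t / 2 + t % 2 - r)) ×ˢ (univ.powersetCard (t / 2)) := by
    ext z
    simp only [mem_Lev, mem_product, mem_powersetCard_univ]
    omega
  rw [h, card_product, card_powersetCard, card_powersetCard, card_univ, card_univ, hp, hq, NL]

lemma sh1_subset_Lev {p r t : ℕ} {F : Finset (Finset α × Finset β)}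
    (ht : t % 2 = 0) (hF : F ⊆ Lev p r (t + 1)) :
    sh1 F ⊆ (Lev p r t : Finset (Finset α × Finset β)) := by
  intro y hy
  obtain ⟨z, hz, a, ha, rfl⟩ := mem_sh1.1 hy
  obtain ⟨h1, h2⟩ := mem_Lev.1 (hF hz)
  have hc : 0 < z.1.card := card_pos.2 ⟨a, ha⟩
  rw [mem_Lev]
  have he : (z.1.erase a).card = z.1.card - 1 := card_erase_of_mem ha
  dsimp only
  omega

lemma sh2_subset_Lev {p r t : ℕ} {F : Finset (Finset α × Finset β)}
    (ht : t % 2 = 1) (hF : F ⊆ Lev p r (t + 1)) :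
    sh2 F ⊆ (Lev p r t : Finset (Finset α × Finset β)) := by
  intro y hy
  obtain ⟨z, hz, a, ha, rfl⟩ := mem_sh2.1 hy
  obtain ⟨h1, h2⟩ := mem_Lev.1 (hF hz)
  have hc : 0 < z.2.card := card_pos.2 ⟨a, ha⟩
  rw [mem_Lev]
  have he : (z.2.erase a).card = z.2.card - 1 := card_erase_of_mem ha
  dsimp only
  omega

lemma div_le_div_right' {a b c : ℚ} (h : a ≤ b) (hc : 0 ≤ c) : a / c ≤ b / c := by
  rw [div_eq_mul_inv, div_eq_mul_inv]
  exact mul_le_mul_of_nonneg_right h (by positivity)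

/-- Fibered local LYM inequality, first coordinate. -/
lemma sh1_lym {p : ℕ} (hp : Fintype.card α = p) {F : Finset (Finset α × Finset β)} {u : ℕ}
    (hF : ∀ z ∈ F, z.1.card = u + 1) :
    (F.card : ℚ) / p.choose (u + 1) ≤ ((sh1 F).card : ℚ) / p.choose u := by
  classical
  subst hp
  set D : Finset (Finset β) := F.image Prod.snd with hD
  set fib : Finset β → Finset (Finset α) :=
    fun d => (F.filter fun z => z.2 = d).image Prod.fst with hfib
  have hfibcard : ∀ d, (F.filter fun z => z.2 = d).card = (fib d).card := by
    intro d
    rw [hfib]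
    refine (card_image_of_injOn ?_).symm
    intro z hz w hw h
    simp only [mem_coe, mem_filter] at hz hw
    exact Prod.ext h (hz.2.trans hw.2.symm)
  have hFsum : F.card = ∑ d ∈ D, (fib d).card := by
    rw [card_eq_sum_card_fiberwise (f := Prod.snd) (t := D) fun z hz => mem_image_of_mem _ hz]
    exact sum_congr rfl fun d _ => hfibcard d
  have hfibsized : ∀ d, Set.Sized (u + 1) ((fib d : Finset (Finset α)) : Set (Finset α)) := by
    intro d c hc
    simp only [hfib, coe_image, Set.mem_image, mem_coe, mem_filter] at hc
    obtain ⟨z, ⟨hzF, _⟩, rfl⟩ := hc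
    exact hF z hzF
  have hkey : ∀ d, ((fib d).card : ℚ) / (Fintype.card α).choose (u + 1)
      ≤ (((fib d).shadow).card : ℚ) / (Fintype.card α).choose u := by
    intro d
    have h := Finset.card_div_choose_le_card_shadow_div_choose (𝕜 := ℚ)
      (Nat.succ_ne_zero u) (hfibsized d)
    simpa using h
  have hSsum : (∑ d ∈ D, ((fib d).shadow).card) ≤ (sh1 F).card := by
    have hsub : (D.biUnion fun d => ((fib d).shadow).image fun c => (c, d)) ⊆ sh1 F := by
      intro y hy
      simp only [mem_biUnion, mem_image] at hy
      obtain ⟨d, _, c, hc, rfl⟩ := hy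
      obtain ⟨c', hc', a, ha, rfl⟩ := mem_shadow_iff.1 hc
      simp only [hfib, mem_image, mem_filter] at hc'
      obtain ⟨z, ⟨hzF, hz2⟩, rfl⟩ := hc'
      exact mem_sh1.2 ⟨z, hzF, a, ha, by rw [hz2]⟩
    have hdisj : ∀ x ∈ D, ∀ y ∈ D, x ≠ y →
        Disjoint (((fib x).shadow).image fun c => (c, x))
          (((fib y).shadow).image fun c => (c, y)) := by
      intro x _ y _ hxy
      rw [disjoint_left]
      rintro w hw1 hw2
      simp only [mem_image] at hw1 hw2
      obtain ⟨c, _, rfl⟩ := hw1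
      obtain ⟨c', _, h⟩ := hw2
      exact hxy (congrArg Prod.snd h).symm
    calc ∑ d ∈ D, ((fib d).shadow).card
        = ∑ d ∈ D, (((fib d).shadow).image fun c => (c, d)).card := by
          refine sum_congr rfl fun d _ => ?_
          rw [card_image_of_injective _ fun c c' h => congrArg Prod.fst h]
      _ = (D.biUnion fun d => ((fib d).shadow).image fun c => (c, d)).card :=
          (card_biUnion hdisj).symm
      _ ≤ (sh1 F).card := card_le_card hsub
  calc (F.card : ℚ) / (Fintype.card α).choose (u + 1)
      = ∑ d ∈ D, ((fib d).card : ℚ) / (Fintype.card α).choose (u + 1) := by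
        rw [hFsum]; push_cast; rw [sum_div]
    _ ≤ ∑ d ∈ D, (((fib d).shadow).card : ℚ) / (Fintype.card α).choose u :=
        sum_le_sum fun d _ => hkey d
    _ = (∑ d ∈ D, (((fib d).shadow).card : ℚ)) / (Fintype.card α).choose u := by
        rw [sum_div]
    _ ≤ ((sh1 F).card : ℚ) / (Fintype.card α).choose u := by
        refine div_le_div_right' ?_ (by positivity)
        exact_mod_cast hSsum

/-- Fibered local LYM inequality, second coordinate. -/
lemma sh2_lym {q : ℕ} (hq : Fintype.card β = q) {F : Finset (Finset α × Finset β)} {v : ℕ}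
    (hF : ∀ z ∈ F, z.2.card = v + 1) :
    (F.card : ℚ) / q.choose (v + 1) ≤ ((sh2 F).card : ℚ) / q.choose v := by
  classical
  subst hq
  set D : Finset (Finset α) := F.image Prod.fst with hD
  set fib : Finset α → Finset (Finset β) :=
    fun c => (F.filter fun z => z.1 = c).image Prod.snd with hfib
  have hfibcard : ∀ c, (F.filter fun z => z.1 = c).card = (fib c).card := by
    intro c
    rw [hfib]
    refine (card_image_of_injOn ?_).symm
    intro z hz w hw h
    simp only [mem_coe, mem_filter] at hz hw
    exact Prod.ext (hz.2.trans hw.2.symm) h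
  have hFsum : F.card = ∑ c ∈ D, (fib c).card := by
    rw [card_eq_sum_card_fiberwise (f := Prod.fst) (t := D) fun z hz => mem_image_of_mem _ hz]
    exact sum_congr rfl fun c _ => hfibcard c
  have hfibsized : ∀ c, Set.Sized (v + 1) ((fib c : Finset (Finset β)) : Set (Finset β)) := by
    intro c d hd
    simp only [hfib, coe_image, Set.mem_image, mem_coe, mem_filter] at hd
    obtain ⟨z, ⟨hzF, _⟩, rfl⟩ := hd
    exact hF z hzF
  have hkey : ∀ c, ((fib c).card : ℚ) / (Fintype.card β).choose (v + 1)
      ≤ (((fib c).shadow).card : ℚ) / (Fintype.card β).choose v := by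
    intro c
    have h := Finset.card_div_choose_le_card_shadow_div_choose (𝕜 := ℚ)
      (Nat.succ_ne_zero v) (hfibsized c)
    simpa using h
  have hSsum : (∑ c ∈ D, ((fib c).shadow).card) ≤ (sh2 F).card := by
    have hsub : (D.biUnion fun c => ((fib c).shadow).image fun d => (c, d)) ⊆ sh2 F := by
      intro y hy
      simp only [mem_biUnion, mem_image] at hy
      obtain ⟨c, _, d, hd, rfl⟩ := hy
      obtain ⟨d', hd', a, ha, rfl⟩ := mem_shadow_iff.1 hd
      simp only [hfib, mem_image, mem_filter] at hd'
      obtain ⟨z, ⟨hzF, hz1⟩, rfl⟩ := hd'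
      exact mem_sh2.2 ⟨z, hzF, a, ha, by rw [hz1]⟩
    have hdisj : ∀ x ∈ D, ∀ y ∈ D, x ≠ y →
        Disjoint (((fib x).shadow).image fun d => (x, d))
          (((fib y).shadow).image fun d => (y, d)) := by
      intro x _ y _ hxy
      rw [disjoint_left]
      rintro w hw1 hw2
      simp only [mem_image] at hw1 hw2
      obtain ⟨d, _, rfl⟩ := hw1
      obtain ⟨d', _, h⟩ := hw2
      exact hxy (congrArg Prod.fst h).symm
    calc ∑ c ∈ D, ((fib c).shadow).card
        = ∑ c ∈ D, (((fib c).shadow).image fun d => (c, d)).card := by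
          refine sum_congr rfl fun c _ => ?_
          rw [card_image_of_injective _ fun d d' h => congrArg Prod.snd h]
      _ = (D.biUnion fun c => ((fib c).shadow).image fun d => (c, d)).card :=
          (card_biUnion hdisj).symm
      _ ≤ (sh2 F).card := card_le_card hsub
  calc (F.card : ℚ) / (Fintype.card β).choose (v + 1)
      = ∑ c ∈ D, ((fib c).card : ℚ) / (Fintype.card β).choose (v + 1) := by
        rw [hFsum]; push_cast; rw [sum_div]
    _ ≤ ∑ c ∈ D, (((fib c).shadow).card : ℚ) / (Fintype.card β).choose v :=
        sum_le_sum fun c _ => hkey c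
    _ = (∑ c ∈ D, (((fib c).shadow).card : ℚ)) / (Fintype.card β).choose v := by
        rw [sum_div]
    _ ≤ ((sh2 F).card : ℚ) / (Fintype.card β).choose v := by
        refine div_le_div_right' ?_ (by positivity)
        exact_mod_cast hSsum

lemma step1 {p q r t : ℕ} (hp : Fintype.card α = p) (hq : Fintype.card β = q)
    (ht : t % 2 = 0) (hval : r ≤ p + t / 2)
    {F : Finset (Finset α × Finset β)} (hF : F ⊆ Lev p r (t + 1)) :
    (F.card : ℚ) / NL p q r (t + 1) ≤ ((sh1 F).card : ℚ) / NL p q r t := by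
  set u := p + t / 2 - r with hu
  have h1 : ∀ z ∈ F, z.1.card = u + 1 := by
    intro z hz
    have h := (mem_Lev.1 (hF hz)).1
    omega
  have h2 := sh1_lym hp h1
  have e1 : p + (t + 1) / 2 + (t + 1) % 2 - r = u + 1 := by omega
  have e2 : (t + 1) / 2 = t / 2 := by omega
  have e3 : p + t / 2 + t % 2 - r = u := by omega
  rw [NL, NL, e1, e2, e3]
  push_cast
  rw [← div_div, ← div_div]
  exact div_le_div_right' h2 (by positivity)

lemma step2 {p q r t : ℕ} (hp : Fintype.card α = p) (hq : Fintype.card β = q)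
    (ht : t % 2 = 1) (hval : r ≤ p + t / 2 + 1)
    {F : Finset (Finset α × Finset β)} (hF : F ⊆ Lev p r (t + 1)) :
    (F.card : ℚ) / NL p q r (t + 1) ≤ ((sh2 F).card : ℚ) / NL p q r t := by
  set v := t / 2 with hv
  have h1 : ∀ z ∈ F, z.2.card = v + 1 := by
    intro z hz
    have h := (mem_Lev.1 (hF hz)).2
    omega
  have h2 := sh2_lym hq h1
  have e1 : p + (t + 1) / 2 + (t + 1) % 2 - r = p + t / 2 + t % 2 - r := by omega
  have e2 : (t + 1) / 2 = v + 1 := by omega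
  rw [NL, NL, e1, e2]
  push_cast
  rw [mul_comm ((p.choose (p + t / 2 + t % 2 - r)) : ℚ) _,
    mul_comm ((p.choose (p + t / 2 + t % 2 - r)) : ℚ) _]
  rw [← div_div, ← div_div]
  exact div_le_div_right' h2 (by positivity)

/-- The telescoping family: start at the top level `2r+1` and go down, at each step taking the
appropriate shadow and adding the part of `A'` in the new level. -/
def gfam (A' : Finset (Finset α × Finset β)) (p r : ℕ) : ℕ → Finset (Finset α × Finset β)
  | 0 => A' ∩ Lev p r (2 * r + 1)
  | k + 1 => (if (2 * r - k) % 2 = 0 then sh1 (gfam A' p r k) else sh2 (gfam A' p r k))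
      ∪ (A' ∩ Lev p r (2 * r - k))

lemma gfam_inv {p q r : ℕ} (hp : Fintype.card α = p) (hq : Fintype.card β = q)
    {A' : Finset (Finset α × Finset β)}
    (hanti : ∀ z ∈ A', ∀ w ∈ A', z ≠ w → ¬(z.1 ⊆ w.1 ∧ z.2 ⊆ w.2))
    (t0 : ℕ) (ht0 : ∀ t, t0 ≤ t ↔ r ≤ p + t / 2 + t % 2) :
    ∀ k, k ≤ 2 * r + 1 - t0 →
      gfam A' p r k ⊆ (Lev p r (2 * r + 1 - k) : Finset (Finset α × Finset β)) ∧
      (∀ y ∈ gfam A' p r k, ∃ z ∈ A', y.1 ⊆ z.1 ∧ y.2 ⊆ z.2) ∧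
      (∑ t ∈ Icc (2 * r + 1 - k) (2 * r + 1), ((A' ∩ Lev p r t).card : ℚ) / NL p q r t)
        ≤ ((gfam A' p r k).card : ℚ) / NL p q r (2 * r + 1 - k) := by
  have ht0top : t0 ≤ 2 * r + 1 := (ht0 (2 * r + 1)).2 (by omega)
  intro k
  induction k with
  | zero =>
    intro _
    refine ⟨inter_subset_right, fun y hy => ⟨y, (mem_inter.1 hy).1, Subset.refl _, Subset.refl _⟩, ?_⟩
    have h0 : 2 * r + 1 - 0 = 2 * r + 1 := rfl
    rw [h0, Icc_self, sum_singleton]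
    exact le_refl _
  | succ k ih =>
    intro hk1
    have hk : k ≤ 2 * r + 1 - t0 := by omega
    obtain ⟨ihsub, ihdom, ihsum⟩ := ih hk
    have hkr : k ≤ 2 * r := by omega
    have htt : 2 * r + 1 - k = (2 * r - k) + 1 := by omega
    have htk1 : 2 * r + 1 - (k + 1) = 2 * r - k := by omega
    set t := 2 * r - k with htdef
    have hvalt : r ≤ p + t / 2 + t % 2 := (ht0 t).1 (by omega)
    rw [htt] at ihsub ihsum
    rw [htk1]
    have hgeq : gfam A' p r (k + 1) =
        (if t % 2 = 0 then sh1 (gfam A' p r k) else sh2 (gfam A' p r k))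
          ∪ (A' ∩ Lev p r t) := rfl
    -- facts about the shadow part, uniform in the parity
    have hSH : ∀ SH : Finset (Finset α × Finset β),
        (∀ y ∈ SH, ∃ z ∈ gfam A' p r k, y.1 ⊆ z.1 ∧ y.2 ⊆ z.2 ∧
          y.1.card + y.2.card < z.1.card + z.2.card) →
        (∀ y ∈ SH, ∃ x ∈ A', (y.1 ⊆ x.1 ∧ y.2 ⊆ x.2) ∧
          y.1.card + y.2.card < x.1.card + x.2.card) := by
      intro SH hdom y hy
      obtain ⟨z, hz, hy1, hy2, hlt⟩ := hdom y hy
      obtain ⟨x, hx, hx1, hx2⟩ := ihdom z hz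
      exact ⟨x, hx, ⟨hy1.trans hx1, hy2.trans hx2⟩,
        lt_of_lt_of_le hlt (add_le_add (card_le_card hx1) (card_le_card hx2))⟩
    rcases Nat.mod_two_eq_zero_or_one t with hpar | hpar
    · -- even t : use sh1
      have hif : (if t % 2 = 0 then sh1 (gfam A' p r k) else sh2 (gfam A' p r k))
          = sh1 (gfam A' p r k) := if_pos hpar
      rw [hif] at hgeq
      have hSHsub : sh1 (gfam A' p r k) ⊆ (Lev p r t : Finset (Finset α × Finset β)) :=
        sh1_subset_Lev hpar ihsub
      have hdom' := hSH (sh1 (gfam A' p r k)) (fun y hy => sh1_dominated hy)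
      have hnotA : ∀ y ∈ sh1 (gfam A' p r k), y ∉ A' := by
        intro y hy hyA
        obtain ⟨x, hx, hxsub, hlt⟩ := hdom' y hy
        refine hanti y hyA x hx ?_ hxsub
        rintro rfl; omega
      have hdisj : Disjoint (sh1 (gfam A' p r k)) (A' ∩ Lev p r t) := by
        rw [disjoint_left]
        intro y hy hy2
        exact hnotA y hy (mem_inter.1 hy2).1
      have hcard : (gfam A' p r (k + 1)).card
          = (sh1 (gfam A' p r k)).card + (A' ∩ Lev p r t).card := by
        rw [hgeq, card_union_of_disjoint hdisj]
      have hlym := step1 hp hq hpar (by omega) ihsub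
      refine ⟨?_, ?_, ?_⟩
      · rw [hgeq]
        exact union_subset hSHsub inter_subset_right
      · rw [hgeq]
        intro y hy
        rcases mem_union.1 hy with h | h
        · obtain ⟨x, hx, hxs, _⟩ := hdom' y h
          exact ⟨x, hx, hxs⟩
        · exact ⟨y, (mem_inter.1 h).1, Subset.refl _, Subset.refl _⟩
      · have hsplit : Icc t (2 * r + 1) = insert t (Icc (t + 1) (2 * r + 1)) := by
          ext x
          simp only [mem_Icc, mem_insert]
          omega
        rw [hsplit, sum_insert (by simp only [mem_Icc]; omega)]
        calc ((A' ∩ Lev p r t).card : ℚ) / NL p q r t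
              + ∑ x ∈ Icc (t + 1) (2 * r + 1), ((A' ∩ Lev p r x).card : ℚ) / NL p q r x
            ≤ ((A' ∩ Lev p r t).card : ℚ) / NL p q r t
              + ((gfam A' p r k).card : ℚ) / NL p q r (t + 1) := by
              exact add_le_add (le_refl _) ihsum
          _ ≤ ((A' ∩ Lev p r t).card : ℚ) / NL p q r t
              + ((sh1 (gfam A' p r k)).card : ℚ) / NL p q r t := by
              exact add_le_add (le_refl _) hlym
          _ = ((gfam A' p r (k + 1)).card : ℚ) / NL p q r t := by
              rw [hcard]; push_cast; rw [add_div]; ring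
    · -- odd t : use sh2
      have hif : (if t % 2 = 0 then sh1 (gfam A' p r k) else sh2 (gfam A' p r k))
          = sh2 (gfam A' p r k) := if_neg (by omega)
      rw [hif] at hgeq
      have hSHsub : sh2 (gfam A' p r k) ⊆ (Lev p r t : Finset (Finset α × Finset β)) :=
        sh2_subset_Lev hpar ihsub
      have hdom' := hSH (sh2 (gfam A' p r k)) (fun y hy => sh2_dominated hy)
      have hnotA : ∀ y ∈ sh2 (gfam A' p r k), y ∉ A' := by
        intro y hy hyA
        obtain ⟨x, hx, hxsub, hlt⟩ := hdom' y hy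
        refine hanti y hyA x hx ?_ hxsub
        rintro rfl; omega
      have hdisj : Disjoint (sh2 (gfam A' p r k)) (A' ∩ Lev p r t) := by
        rw [disjoint_left]
        intro y hy hy2
        exact hnotA y hy (mem_inter.1 hy2).1
      have hcard : (gfam A' p r (k + 1)).card
          = (sh2 (gfam A' p r k)).card + (A' ∩ Lev p r t).card := by
        rw [hgeq, card_union_of_disjoint hdisj]
      have hlym := step2 hp hq hpar (by omega) ihsub
      refine ⟨?_, ?_, ?_⟩
      · rw [hgeq]
        exact union_subset hSHsub inter_subset_right
      · rw [hgeq]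
        intro y hy
        rcases mem_union.1 hy with h | h
        · obtain ⟨x, hx, hxs, _⟩ := hdom' y h
          exact ⟨x, hx, hxs⟩
        · exact ⟨y, (mem_inter.1 h).1, Subset.refl _, Subset.refl _⟩
      · have hsplit : Icc t (2 * r + 1) = insert t (Icc (t + 1) (2 * r + 1)) := by
          ext x
          simp only [mem_Icc, mem_insert]
          omega
        rw [hsplit, sum_insert (by simp only [mem_Icc]; omega)]
        calc ((A' ∩ Lev p r t).card : ℚ) / NL p q r t
              + ∑ x ∈ Icc (t + 1) (2 * r + 1), ((A' ∩ Lev p r x).card : ℚ) / NL p q r x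
            ≤ ((A' ∩ Lev p r t).card : ℚ) / NL p q r t
              + ((gfam A' p r k).card : ℚ) / NL p q r (t + 1) := by
              exact add_le_add (le_refl _) ihsum
          _ ≤ ((A' ∩ Lev p r t).card : ℚ) / NL p q r t
              + ((sh2 (gfam A' p r k)).card : ℚ) / NL p q r t := by
              exact add_le_add (le_refl _) hlym
          _ = ((gfam A' p r (k + 1)).card : ℚ) / NL p q r t := by
              rw [hcard]; push_cast; rw [add_div]; ring

lemma choose_le_succ_of {n k : ℕ} (h : 2 * k + 1 ≤ n) : n.choose k ≤ n.choose (k + 1) := by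
  have h2 := Nat.choose_succ_right_eq n k
  have h3 : n.choose k * (k + 1) ≤ n.choose k * (n - k) := Nat.mul_le_mul_left _ (by omega)
  rw [← h2] at h3
  exact Nat.le_of_mul_le_mul_right h3 (by omega)

lemma NL_le_sup {p q r t : ℕ} (hr1 : 1 ≤ r) (hrpq : 2 * r ≤ p + q)
    (hval : r ≤ p + t / 2 + t % 2) :
    NL p q r t ≤ (range (r + 1)).sup (fun i => p.choose i * q.choose (r - i)) := by
  by_cases hup : p + t / 2 + t % 2 - r ≤ p
  · rcases Nat.mod_two_eq_zero_or_one t with hpar | hpar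
    · -- outer sphere layer
      have hj : t / 2 ≤ r := by omega
      have e1 : p + t / 2 + t % 2 - r = p - (r - t / 2) := by omega
      have e2 : r - t / 2 ≤ p := by omega
      have e3 : r - (r - t / 2) = t / 2 := by omega
      have e4 : q.choose (t / 2) = q.choose (r - (r - t / 2)) := by rw [e3]
      rw [NL, e1, Nat.choose_symm e2, e4]
      exact Finset.le_sup (f := fun i => p.choose i * q.choose (r - i))
        (mem_range.2 (show r - t / 2 < r + 1 by omega))
    · -- inner sphere layer
      have hj : t / 2 + 1 ≤ r := by omega
      set i := r - 1 - t / 2 with hi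
      have e1 : p + t / 2 + t % 2 - r = p - i := by omega
      have e2 : i ≤ p := by omega
      rw [NL, e1, Nat.choose_symm e2]
      by_cases hpp : 2 * i + 1 ≤ p
      · have h1 : p.choose i ≤ p.choose (i + 1) := choose_le_succ_of hpp
        have h2 : p.choose i * q.choose (t / 2) ≤ p.choose (i + 1) * q.choose (r - (i + 1)) := by
          have e4 : r - (i + 1) = t / 2 := by omega
          rw [e4]
          exact Nat.mul_le_mul_right _ h1
        refine h2.trans ?_
        exact Finset.le_sup (f := fun i => p.choose i * q.choose (r - i))
          (mem_range.2 (show i + 1 < r + 1 by omega))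
      · have hqq : 2 * (t / 2) + 1 ≤ q := by omega
        have h1 : q.choose (t / 2) ≤ q.choose (t / 2 + 1) := choose_le_succ_of hqq
        have h2 : p.choose i * q.choose (t / 2) ≤ p.choose i * q.choose (r - i) := by
          have e4 : r - i = t / 2 + 1 := by omega
          rw [e4]
          exact Nat.mul_le_mul_left _ h1
        refine h2.trans ?_
        exact Finset.le_sup (f := fun i => p.choose i * q.choose (r - i))
          (mem_range.2 (show i < r + 1 by omega))
  · rw [NL, Nat.choose_eq_zero_of_lt (by omega)]
    simp

/-- Core lemma: antichain bound in the product form. -/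
theorem core {p q r : ℕ} (hp : Fintype.card α = p) (hq : Fintype.card β = q)
    (hr1 : 1 ≤ r) (hrpq : 2 * r ≤ p + q) (A' : Finset (Finset α × Finset β))
    (hmem : ∀ z ∈ A', p + z.2.card = r + z.1.card ∨ p + z.2.card + 1 = r + z.1.card)
    (hanti : ∀ z ∈ A', ∀ w ∈ A', z ≠ w → ¬(z.1 ⊆ w.1 ∧ z.2 ⊆ w.2)) :
    A'.card ≤ (range (r + 1)).sup (fun i => p.choose i * q.choose (r - i)) := by
  classical
  obtain ⟨t0, ht0le, ht0, hNL0pos⟩ :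
      ∃ t0, t0 ≤ 2 * r + 1 ∧ (∀ t, t0 ≤ t ↔ r ≤ p + t / 2 + t % 2) ∧ 0 < NL p q r t0 := by
    by_cases h : r ≤ p
    · refine ⟨0, by omega, fun t => by omega, ?_⟩
      rw [NL]
      exact Nat.mul_pos (Nat.choose_pos (by omega)) (Nat.choose_pos (by omega))
    · refine ⟨2 * (r - p) - 1, by omega, fun t => by omega, ?_⟩
      rw [NL]
      exact Nat.mul_pos (Nat.choose_pos (by omega)) (Nat.choose_pos (by omega))
  have hmemlev : ∀ z ∈ A', ∃ t, t0 ≤ t ∧ t ≤ 2 * r + 1 ∧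
      z ∈ (Lev p r t : Finset (Finset α × Finset β)) := by
    intro z hz
    have hc1 : z.1.card ≤ p := by
      have h := Finset.card_le_univ z.1
      rwa [hp] at h
    rcases hmem z hz with h | h
    · exact ⟨2 * z.2.card, (ht0 _).2 (by omega), by omega,
        mem_Lev.2 (by constructor <;> omega)⟩
    · exact ⟨2 * z.2.card + 1, (ht0 _).2 (by omega), by omega,
        mem_Lev.2 (by constructor <;> omega)⟩
  have hbot : 2 * r + 1 - (2 * r + 1 - t0) = t0 := by omega
  obtain ⟨hGsub, -, hGsum⟩ := gfam_inv hp hq hanti t0 ht0 (2 * r + 1 - t0) (le_refl _)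
  rw [hbot] at hGsub hGsum
  have hval0 : r ≤ p + t0 / 2 + t0 % 2 := (ht0 t0).1 (le_refl _)
  have h1 : (∑ t ∈ Icc t0 (2 * r + 1), ((A' ∩ Lev p r t).card : ℚ) / NL p q r t) ≤ 1 := by
    refine hGsum.trans ?_
    rw [div_le_one (by exact_mod_cast hNL0pos)]
    have h := card_le_card hGsub
    rw [Lev_card hp hq hval0] at h
    exact_mod_cast h
  have hA'eq : A' = (Icc t0 (2 * r + 1)).biUnion (fun t => A' ∩ Lev p r t) := by
    ext z
    simp only [mem_biUnion, mem_inter, mem_Icc]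
    constructor
    · intro hz
      obtain ⟨t, ha, hb, hcm⟩ := hmemlev z hz
      exact ⟨t, ⟨ha, hb⟩, hz, hcm⟩
    · rintro ⟨t, _, hz, _⟩
      exact hz
  have h2 : A'.card = ∑ t ∈ Icc t0 (2 * r + 1), (A' ∩ Lev p r t).card := by
    conv_lhs => rw [hA'eq]
    refine card_biUnion ?_
    intro x _ y _ hxy
    rw [Function.onFun, disjoint_left]
    rintro z hz1 hz2
    have e1 := mem_Lev.1 (mem_inter.1 hz1).2
    have e2 := mem_Lev.1 (mem_inter.1 hz2).2
    omega
  set M := (range (r + 1)).sup (fun i => p.choose i * q.choose (r - i)) with hM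
  have h3 : ∀ t ∈ Icc t0 (2 * r + 1), ((A' ∩ Lev p r t).card : ℚ)
      ≤ (M : ℚ) * (((A' ∩ Lev p r t).card : ℚ) / NL p q r t) := by
    intro t ht'
    have hvalt : r ≤ p + t / 2 + t % 2 := (ht0 t).1 (mem_Icc.1 ht').1
    have hNM : NL p q r t ≤ M := NL_le_sup hr1 hrpq hvalt
    rcases Nat.eq_zero_or_pos (NL p q r t) with h0 | h0
    · have hz : (A' ∩ Lev p r t).card = 0 := by
        have hl := card_le_card
          (show A' ∩ Lev p r t ⊆ (Lev p r t : Finset (Finset α × Finset β)) from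
            inter_subset_right)
        rw [Lev_card hp hq hvalt, h0] at hl
        omega
      simp [hz]
    · rw [← mul_div_assoc, le_div_iff₀ (by exact_mod_cast h0)]
      calc ((A' ∩ Lev p r t).card : ℚ) * (NL p q r t : ℚ)
          ≤ ((A' ∩ Lev p r t).card : ℚ) * (M : ℚ) := by
            refine mul_le_mul_of_nonneg_left ?_ (Nat.cast_nonneg _)
            exact_mod_cast hNM
        _ = (M : ℚ) * ((A' ∩ Lev p r t).card : ℚ) := mul_comm _ _
  have hfin : (A'.card : ℚ) ≤ (M : ℚ) := by
    rw [h2]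
    push_cast
    calc (∑ t ∈ Icc t0 (2 * r + 1), ((A' ∩ Lev p r t).card : ℚ))
        ≤ ∑ t ∈ Icc t0 (2 * r + 1),
            (M : ℚ) * (((A' ∩ Lev p r t).card : ℚ) / NL p q r t) := sum_le_sum h3
      _ = (M : ℚ) * ∑ t ∈ Icc t0 (2 * r + 1), ((A' ∩ Lev p r t).card : ℚ) / NL p q r t := by
          rw [mul_sum]
      _ ≤ (M : ℚ) * 1 := by
          refine mul_le_mul_of_nonneg_left h1 (by positivity)
      _ = (M : ℚ) := mul_one _
  exact_mod_cast hfin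

end Stmt8

/-- For `1 ≤ r` with `2r ≤ p + q`, every antichain contained in the union of the
spheres `S_r[p,q] ∪ S_{r-1}[p,q]` has size at most the size of the largest layer
of the outer sphere, `max { C(p,i) * C(q,j) : i + j = r }`. -/
theorem stmt_8 (p q r : ℕ) (hr1 : 1 ≤ r) (hrpq : 2 * r ≤ p + q)
    (A : Finset (Finset ℕ))
    (hA : ∀ x ∈ A, x ⊆ Finset.Icc 1 (p + q) ∧
      ((Finset.Icc 1 p \ x).card + (x \ Finset.Icc 1 p).card = r ∨
        (Finset.Icc 1 p \ x).card + (x \ Finset.Icc 1 p).card = r - 1))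
    (hanti : IsAntichain (· ⊆ ·) (A : Set (Finset ℕ))) :
    A.card ≤ (Finset.range (r + 1)).sup (fun i => Nat.choose p i * Nat.choose q (r - i)) := by
  classical
  have hPcard : Fintype.card (↥(Finset.Icc 1 p)) = p := by
    rw [Fintype.card_coe, Nat.card_Icc]; omega
  have hQcard : Fintype.card (↥(Finset.Icc (p + 1) (p + q))) = q := by
    rw [Fintype.card_coe, Nat.card_Icc]; omega
  set f : Finset ℕ → Finset (↥(Finset.Icc 1 p)) × Finset (↥(Finset.Icc (p + 1) (p + q))) :=
    fun x => (x.subtype (· ∈ Finset.Icc 1 p), x.subtype (· ∈ Finset.Icc (p + 1) (p + q))) with hf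
  have hfilter : ∀ x ∈ A, Finset.filter (· ∈ Finset.Icc 1 p) x = x ∩ Finset.Icc 1 p ∧
      Finset.filter (· ∈ Finset.Icc (p + 1) (p + q)) x = x \ Finset.Icc 1 p := by
    intro x hx
    refine ⟨Finset.filter_mem_eq_inter, ?_⟩
    ext n
    simp only [Finset.mem_filter, Finset.mem_sdiff, Finset.mem_Icc]
    constructor
    · rintro ⟨hn, hge, hle⟩
      exact ⟨hn, by omega⟩
    · rintro ⟨hn, hnot⟩
      have hmem := (hA x hx).1 hn
      rw [Finset.mem_Icc] at hmem
      exact ⟨hn, by omega, by omega⟩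
  have hcard1 : ∀ x ∈ A, (f x).1.card = (x ∩ Finset.Icc 1 p).card ∧
      (f x).2.card = (x \ Finset.Icc 1 p).card := by
    intro x hx
    constructor
    · rw [show (f x).1 = x.subtype (· ∈ Finset.Icc 1 p) from rfl, Finset.card_subtype,
        (hfilter x hx).1]
    · rw [show (f x).2 = x.subtype (· ∈ Finset.Icc (p + 1) (p + q)) from rfl,
        Finset.card_subtype, (hfilter x hx).2]
  have horder : ∀ x ∈ A, ∀ y ∈ A, ((f x).1 ⊆ (f y).1 ∧ (f x).2 ⊆ (f y).2) → x ⊆ y := by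
    rintro x hx y hy ⟨h1, h2⟩
    have h1' : Finset.filter (· ∈ Finset.Icc 1 p) x ⊆ Finset.filter (· ∈ Finset.Icc 1 p) y := by
      rw [← Finset.subtype_map (· ∈ Finset.Icc 1 p), ← Finset.subtype_map (· ∈ Finset.Icc 1 p)]
      exact Finset.map_subset_map.2 h1
    have h2' : Finset.filter (· ∈ Finset.Icc (p + 1) (p + q)) x
        ⊆ Finset.filter (· ∈ Finset.Icc (p + 1) (p + q)) y := by
      rw [← Finset.subtype_map (· ∈ Finset.Icc (p + 1) (p + q)),
        ← Finset.subtype_map (· ∈ Finset.Icc (p + 1) (p + q))]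
      exact Finset.map_subset_map.2 h2
    intro n hn
    have hmem := (hA x hx).1 hn
    rw [Finset.mem_Icc] at hmem
    by_cases hnp : n ∈ Finset.Icc 1 p
    · have hh : n ∈ Finset.filter (· ∈ Finset.Icc 1 p) x := Finset.mem_filter.2 ⟨hn, hnp⟩
      exact (Finset.mem_filter.1 (h1' hh)).1
    · have hnq : n ∈ Finset.Icc (p + 1) (p + q) := by
        rw [Finset.mem_Icc]
        rw [Finset.mem_Icc] at hnp
        omega
      have hh : n ∈ Finset.filter (· ∈ Finset.Icc (p + 1) (p + q)) x :=
        Finset.mem_filter.2 ⟨hn, hnq⟩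
      exact (Finset.mem_filter.1 (h2' hh)).1
  have hinj : Set.InjOn f A := by
    intro x hx y hy hxy
    have ha : x ⊆ y := horder x hx y hy
      (by rw [hxy]; exact ⟨Finset.Subset.refl _, Finset.Subset.refl _⟩)
    have hb : y ⊆ x := horder y hy x hx
      (by rw [hxy]; exact ⟨Finset.Subset.refl _, Finset.Subset.refl _⟩)
    exact Finset.Subset.antisymm ha hb
  set A' := A.image f with hA'def
  have hcardA : A'.card = A.card := Finset.card_image_of_injOn hinj
  have hIccP : (Finset.Icc 1 p).card = p := by rw [Nat.card_Icc]; omega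
  have hmem' : ∀ z ∈ A', p + z.2.card = r + z.1.card ∨ p + z.2.card + 1 = r + z.1.card := by
    intro z hz
    obtain ⟨x, hx, rfl⟩ := Finset.mem_image.1 hz
    obtain ⟨hc1, hc2⟩ := hcard1 x hx
    have hpart : (Finset.Icc 1 p ∩ x).card + (Finset.Icc 1 p \ x).card = p := by
      rw [Finset.card_inter_add_card_sdiff, hIccP]
    have hPx : (x ∩ Finset.Icc 1 p).card = (Finset.Icc 1 p ∩ x).card := by
      rw [Finset.inter_comm]
    rcases (hA x hx).2 with h | h
    · left; rw [hc1, hc2, hPx]; omega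
    · right; rw [hc1, hc2, hPx]; omega
  have hanti' : ∀ z ∈ A', ∀ w ∈ A', z ≠ w → ¬(z.1 ⊆ w.1 ∧ z.2 ⊆ w.2) := by
    intro z hz w hw hzw hsub
    obtain ⟨x, hx, rfl⟩ := Finset.mem_image.1 hz
    obtain ⟨y, hy, rfl⟩ := Finset.mem_image.1 hw
    have hxy : x ≠ y := by rintro rfl; exact hzw rfl
    exact hanti (Finset.mem_coe.2 hx) (Finset.mem_coe.2 hy) hxy (horder x hx y hy hsub)
  have hcore := Stmt8.core hPcard hQcard hr1 hrpq A' hmem' hanti'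
  rw [← hcardA]
  exact hcore
end

section
/- Let p, q, i, j be natural numbers with i ≤ p, 2 ≤ j ≤ q, (i+1)·(q+1) ≥ j·(p+1) + 1, and q + 2 ≥ j + j·(j−1)·(i+1). Then C(p,i)·C(q,j) ≥ C(p,i+1)·C(q,j−1) + C(p,i)·C(q,j−2); equivalently, |X_{i,j}| − |X_{i+1,j−1}| ≥ |X_{i,j−2}|. -/
/-!
Write `p = i + m` and `q = j + r`. Relative to `N = C(p,i)·C(q,j)`, the two terms on the left are
`N · jm / ((i+1)(r+1))` and `N · j(j-1) / ((r+1)(r+2))`. The gap hypothesis says `jm + 1 ≤ (i+1)(r+1)`,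
so the first ratio is at most `1 - 1/((i+1)(r+1))`; the third hypothesis says `j(j-1)(i+1) ≤ r + 2`,
so the second ratio is at most `1/((i+1)(r+1))`, and the two add up to at most `1`.
-/

namespace Nat

theorem choose_pred_mul_succ {k : ℕ} (r : ℕ) (hk : 0 < k) :
    (k + r).choose (k - 1) * (r + 1) = (k + r).choose k * k := by
  have h := choose_succ_right_eq (k + r) (k - 1)
  rw [Nat.sub_add_cancel hk, show k + r - (k - 1) = r + 1 by omega] at h
  exact h.symm

theorem choose_sub_two_mul {k : ℕ} (r : ℕ) (hk : 2 ≤ k) :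
    (k + r).choose (k - 2) * ((r + 1) * (r + 2)) = (k + r).choose k * (k * (k - 1)) := by
  have h := choose_pred_mul_succ (k := k - 1) (r + 1) (by omega)
  rw [show k - 1 + (r + 1) = k + r by omega, show k - 1 - 1 = k - 2 by omega] at h
  calc (k + r).choose (k - 2) * ((r + 1) * (r + 2))
      = (k + r).choose (k - 2) * (r + 1 + 1) * (r + 1) := by ring
    _ = (k + r).choose (k - 1) * (r + 1) * (k - 1) := by rw [h]; ring
    _ = (k + r).choose k * (k * (k - 1)) := by rw [choose_pred_mul_succ r (by omega)]; ring

theorem add_le_of_mul_eq_mul {x y N a b c d : ℕ} (hc : 0 < c) (hx : x * a = N * b)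
    (hy : y * c = N * d) (hb : b + 1 ≤ a) (hd : d * a ≤ c) : x + y ≤ N := by
  refine le_of_mul_le_mul_right ?_ (Nat.mul_pos (by omega : 0 < a) hc)
  calc (x + y) * (a * c) = N * (b * c + d * a) := by
        rw [add_mul, show x * (a * c) = x * a * c by ring, show y * (a * c) = y * c * a by ring,
          hx, hy]
        ring
    _ ≤ N * (b * c + c) := by gcongr
    _ = N * ((b + 1) * c) := by ring
    _ ≤ N * (a * c) := by gcongr

end Nat

/-- Under the stated conditions on `i, j, p, q`, one has
`|X_{i,j}| - |X_{i+1,j-1}| ≥ |X_{i,j-2}|`, i.e.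
`C(p,i)*C(q,j) ≥ C(p,i+1)*C(q,j-1) + C(p,i)*C(q,j-2)`. -/
theorem stmt_10 (p q i j : ℕ) (hip : i ≤ p) (hj2 : 2 ≤ j) (hjq : j ≤ q)
    (hgap : (i + 1) * (q + 1) ≥ j * (p + 1) + 1)
    (hbig : q + 2 ≥ j + j * (j - 1) * (i + 1)) :
    Nat.choose p (i + 1) * Nat.choose q (j - 1) + Nat.choose p i * Nat.choose q (j - 2) ≤
      Nat.choose p i * Nat.choose q j := by
  obtain ⟨m, rfl⟩ := Nat.exists_eq_add_of_le hip
  obtain ⟨r, rfl⟩ := Nat.exists_eq_add_of_le hjq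
  have hp : (i + m).choose (i + 1) * (i + 1) = (i + m).choose i * m := by
    simpa using Nat.choose_succ_right_eq (i + m) i
  have hgap' : j * m + 1 ≤ (i + 1) * (r + 1) := by nlinarith
  have hbig' : j * (j - 1) * (i + 1) ≤ r + 2 := by omega
  refine Nat.add_le_of_mul_eq_mul (a := (i + 1) * (r + 1)) (b := j * m) (c := (r + 1) * (r + 2))
    (d := j * (j - 1)) (by positivity) ?_ ?_ hgap' ?_
  · calc (i + m).choose (i + 1) * (j + r).choose (j - 1) * ((i + 1) * (r + 1))
        = (i + m).choose (i + 1) * (i + 1) * ((j + r).choose (j - 1) * (r + 1)) := by ring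
      _ = (i + m).choose i * (j + r).choose j * (j * m) := by
        rw [hp, Nat.choose_pred_mul_succ r (by omega)]; ring
  · rw [mul_assoc, Nat.choose_sub_two_mul r hj2, mul_assoc]
  · calc j * (j - 1) * ((i + 1) * (r + 1)) = j * (j - 1) * (i + 1) * (r + 1) := by ring
      _ ≤ (r + 2) * (r + 1) := by gcongr
      _ = (r + 1) * (r + 2) := by ring
end

section
/- Let p, q, r be natural numbers with r ≤ p, and let x be an element of the ball B_r[p,q] with i = |P₀ \ x| and j = |x \ P₀|. Then the height of x in the poset B_r[p,q] (ordered by set inclusion) equals r − i + j; i.e., the longest chain x₀ ⊂ x₁ ⊂ ⋯ ⊂ x_h = x with all xₜ ∈ B_r[p,q] has length h = r − i + j. -/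
/-- Every element of a poset of finsets has height at most its cardinality. -/
lemma stmt13_height_le_card (ball : Finset (Finset ℕ)) (z : {S : Finset ℕ // S ∈ ball}) :
    Order.height z ≤ (z.val.card : ℕ∞) := by
  refine Order.height_le_iff'.mpr fun c hc => ?_
  have hmono : StrictMono (fun s : {S : Finset ℕ // S ∈ ball} => s.val.card) := by
    intro a b hab
    exact Finset.card_lt_card (by exact_mod_cast hab)
  have h := (c.map _ hmono).head_add_length_le_nat
  have hlen : (c.map _ hmono).length = c.length := rfl
  simp only [LTSeries.last_map, hc, hlen] at h
  exact_mod_cast le_trans (by omega : c.length ≤ z.val.card) le_rfl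

/-- For `r ≤ p`, the height of an element `x` of the ball `B_r[p,q]` (as a poset under
set inclusion) with `i = |P₀ \ x|` and `j = |x \ P₀|` equals `r - i + j`. -/
theorem stmt_13 (p q r : ℕ) (hrp : r ≤ p)
    (ball : Finset (Finset ℕ))
    (hball : ball = (Finset.Icc 1 (p + q)).powerset.filter
      (fun S => (Finset.Icc 1 p \ S).card + (S \ Finset.Icc 1 p).card ≤ r))
    (x : Finset ℕ) (hx : x ∈ ball)
    (i j : ℕ)
    (hi : i = (Finset.Icc 1 p \ x).card) (hj : j = (x \ Finset.Icc 1 p).card) :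
    Order.height (⟨x, hx⟩ : {S : Finset ℕ // S ∈ ball}) = ((r - i + j : ℕ) : ℕ∞) := by
  have hP0 : (Finset.Icc 1 p).card = p := by simp
  -- basic facts about membership in the ball
  have hmem : ∀ y : Finset ℕ, y ∈ ball ↔
      y ⊆ Finset.Icc 1 (p + q) ∧
      (Finset.Icc 1 p \ y).card + (y \ Finset.Icc 1 p).card ≤ r := by
    intro y
    simp [hball, Finset.mem_filter, Finset.mem_powerset]
  -- card identity: for any finset y, card (Icc 1 p \ y) ≤ p and
  -- y.card + (Icc 1 p \ y).card = p + (y \ Icc 1 p).card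
  have hcard : ∀ y : Finset ℕ,
      y.card + (Finset.Icc 1 p \ y).card = p + (y \ Finset.Icc 1 p).card := by
    intro y
    have h1 : (Finset.Icc 1 p \ y).card + (Finset.Icc 1 p ∩ y).card = p := by
      rw [Finset.card_sdiff_add_card_inter, hP0]
    have h2 : (y \ Finset.Icc 1 p).card + (y ∩ Finset.Icc 1 p).card = y.card :=
      Finset.card_sdiff_add_card_inter y _
    rw [Finset.inter_comm] at h1
    omega
  -- UPPER BOUND
  have upper : Order.height (⟨x, hx⟩ : {S : Finset ℕ // S ∈ ball}) ≤ ((r - i + j : ℕ) : ℕ∞) := by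
    refine Order.height_le_iff'.mpr fun c hc => ?_
    have hmono : StrictMono (fun s : {S : Finset ℕ // S ∈ ball} => s.val.card) := by
      intro a b hab
      exact Finset.card_lt_card (by exact_mod_cast hab)
    have h := (c.map _ hmono).head_add_length_le_nat
    have hlen : (c.map _ hmono).length = c.length := rfl
    simp only [LTSeries.last_map, LTSeries.head_map, hc, hlen] at h
    -- head of chain is in ball, so its card ≥ p - r
    have hhead := ((hmem c.head.val).mp c.head.property).2
    have hh := hcard c.head.val
    have hxmem := ((hmem x).mp hx).2
    have hxc := hcard x
    have hi' : i ≤ p := by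
      rw [hi]
      exact le_trans (Finset.card_le_card (Finset.sdiff_subset)) (le_of_eq hP0)
    have : c.length ≤ r - i + j := by omega
    exact_mod_cast this
  -- LOWER BOUND
  have lower : ∀ n : ℕ, ∀ (y : Finset ℕ) (hy : y ∈ ball),
      n = r - (Finset.Icc 1 p \ y).card + (y \ Finset.Icc 1 p).card →
      (n : ℕ∞) ≤ Order.height (⟨y, hy⟩ : {S : Finset ℕ // S ∈ ball}) := by
    intro n
    induction n with
    | zero => intro y hy _; simp
    | succ m ih =>
      intro y hy hn
      have hymem := (hmem y).mp hy
      set iy := (Finset.Icc 1 p \ y).card with hiy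
      set jy := (y \ Finset.Icc 1 p).card with hjy
      -- find z < y in the ball with stats summing to m
      have key : ∃ (z : Finset ℕ) (hz : z ∈ ball), z ⊂ y ∧
          m = r - (Finset.Icc 1 p \ z).card + (z \ Finset.Icc 1 p).card := by
        by_cases hjpos : 0 < jy
        · -- remove an element of y \ P₀
          obtain ⟨a, ha⟩ := Finset.card_pos.mp hjpos
          have hay : a ∈ y := (Finset.mem_sdiff.mp ha).1
          have hap : a ∉ Finset.Icc 1 p := (Finset.mem_sdiff.mp ha).2
          refine ⟨y.erase a, ?_, Finset.erase_ssubset hay, ?_⟩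
          · refine (hmem _).mpr ⟨(Finset.erase_subset a y).trans hymem.1, ?_⟩
            have e1 : Finset.Icc 1 p \ y.erase a = Finset.Icc 1 p \ y := by
              ext b
              simp only [Finset.mem_sdiff, Finset.mem_erase]
              constructor
              · rintro ⟨hb, hb2⟩; exact ⟨hb, fun h => hb2 ⟨fun h' => hap (h' ▸ hb), h⟩⟩
              · rintro ⟨hb, hb2⟩; exact ⟨hb, fun h => hb2 h.2⟩
            have e2 : y.erase a \ Finset.Icc 1 p = (y \ Finset.Icc 1 p).erase a := by
              ext b
              simp only [Finset.mem_sdiff, Finset.mem_erase]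
              tauto
            rw [e1, e2, Finset.card_erase_of_mem ha]
            omega
          · have e1 : Finset.Icc 1 p \ y.erase a = Finset.Icc 1 p \ y := by
              ext b
              simp only [Finset.mem_sdiff, Finset.mem_erase]
              constructor
              · rintro ⟨hb, hb2⟩; exact ⟨hb, fun h => hb2 ⟨fun h' => hap (h' ▸ hb), h⟩⟩
              · rintro ⟨hb, hb2⟩; exact ⟨hb, fun h => hb2 h.2⟩
            have e2 : y.erase a \ Finset.Icc 1 p = (y \ Finset.Icc 1 p).erase a := by
              ext b
              simp only [Finset.mem_sdiff, Finset.mem_erase]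
              tauto
            rw [e1, e2, Finset.card_erase_of_mem ha]
            omega
        · -- jy = 0, so r - iy = m + 1, hence iy < r; remove an element of y ∩ P₀
          have hjz : jy = 0 := by omega
          have hir : iy < r := by omega
          have hcy := hcard y
          have hpos : 0 < (y ∩ Finset.Icc 1 p).card := by
            have h2 : (y \ Finset.Icc 1 p).card + (y ∩ Finset.Icc 1 p).card = y.card :=
              Finset.card_sdiff_add_card_inter y _
            omega
          obtain ⟨a, ha⟩ := Finset.card_pos.mp hpos
          have hay : a ∈ y := (Finset.mem_inter.mp ha).1
          have hap : a ∈ Finset.Icc 1 p := (Finset.mem_inter.mp ha).2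
          refine ⟨y.erase a, ?_, Finset.erase_ssubset hay, ?_⟩
          · refine (hmem _).mpr ⟨(Finset.erase_subset a y).trans hymem.1, ?_⟩
            have e1 : Finset.Icc 1 p \ y.erase a = insert a (Finset.Icc 1 p \ y) := by
              ext b
              simp only [Finset.mem_sdiff, Finset.mem_erase, Finset.mem_insert]
              constructor
              · rintro ⟨hb, hb2⟩
                by_cases hba : b = a
                · left; exact hba
                · right; exact ⟨hb, fun h => hb2 ⟨hba, h⟩⟩
              · rintro (rfl | ⟨hb, hb2⟩)
                · exact ⟨hap, fun h => h.1 rfl⟩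
                · exact ⟨hb, fun h => hb2 h.2⟩
            have e2 : y.erase a \ Finset.Icc 1 p = y \ Finset.Icc 1 p := by
              ext b
              simp only [Finset.mem_sdiff, Finset.mem_erase]
              constructor
              · rintro ⟨⟨_, hb⟩, hb2⟩; exact ⟨hb, hb2⟩
              · rintro ⟨hb, hb2⟩; exact ⟨⟨fun h => hb2 (h ▸ hap), hb⟩, hb2⟩
            have hnotmem : a ∉ Finset.Icc 1 p \ y := by
              simp [Finset.mem_sdiff, hay]
            rw [e1, e2, Finset.card_insert_of_notMem hnotmem]
            omega
          · have e1 : Finset.Icc 1 p \ y.erase a = insert a (Finset.Icc 1 p \ y) := by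
              ext b
              simp only [Finset.mem_sdiff, Finset.mem_erase, Finset.mem_insert]
              constructor
              · rintro ⟨hb, hb2⟩
                by_cases hba : b = a
                · left; exact hba
                · right; exact ⟨hb, fun h => hb2 ⟨hba, h⟩⟩
              · rintro (rfl | ⟨hb, hb2⟩)
                · exact ⟨hap, fun h => h.1 rfl⟩
                · exact ⟨hb, fun h => hb2 h.2⟩
            have e2 : y.erase a \ Finset.Icc 1 p = y \ Finset.Icc 1 p := by
              ext b
              simp only [Finset.mem_sdiff, Finset.mem_erase]
              constructor
              · rintro ⟨⟨_, hb⟩, hb2⟩; exact ⟨hb, hb2⟩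
              · rintro ⟨hb, hb2⟩; exact ⟨⟨fun h => hb2 (h ▸ hap), hb⟩, hb2⟩
            have hnotmem : a ∉ Finset.Icc 1 p \ y := by
              simp [Finset.mem_sdiff, hay]
            rw [e1, e2, Finset.card_insert_of_notMem hnotmem]
            omega
      obtain ⟨z, hz, hzy, hm⟩ := key
      have hIH := ih z hz hm
      have hlt : (⟨z, hz⟩ : {S : Finset ℕ // S ∈ ball}) < ⟨y, hy⟩ := by
        exact_mod_cast hzy
      have hfin : Order.height (⟨z, hz⟩ : {S : Finset ℕ // S ∈ ball}) < ⊤ :=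
        lt_of_le_of_lt (stmt13_height_le_card ball _) (by exact_mod_cast lt_top_iff_ne_top.mpr (ENat.coe_ne_top _))
      have hstrict := Order.height_strictMono hlt hfin
      have := ENat.add_one_le_iff (ne_of_lt hfin) |>.mpr hstrict
      calc ((m + 1 : ℕ) : ℕ∞) = (m : ℕ∞) + 1 := by push_cast; ring
        _ ≤ Order.height (⟨z, hz⟩ : {S : Finset ℕ // S ∈ ball}) + 1 := by
            exact add_le_add_left hIH 1
        _ ≤ Order.height (⟨y, hy⟩ : {S : Finset ℕ // S ∈ ball}) := this
  exact le_antisymm upper (lower (r - i + j) x hx (by rw [hi, hj]))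
end
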